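/- arXiv:1012.4795 — 8 statements merged into one kernel-verified Lean document; each statement's English description precedes it below -/
import Mathlib

section
/- Let A and B be symmetric positive definite n×n matrices and X any real n×n matrix such that the block matrix [[A, X],[Xᵀ, B]] is positive semidefinite. Then for every ω with 0 < ω < 1, the block matrix [[(1/ω)A, 0],[0, (1/(1−ω))B]] − [[A, X],[Xᵀ, B]] is positive semidefinite. -/
/-!
With `t = (1 - ω) / ω`, the difference is `diag(t • A, t⁻¹ • B)` with off-diagonal blocks `-X`,
`-Xᵀ`; this is the congruence `P J Pᵀ` of the joint covariance `J` by
`P = diag(√t • 1, -(√t)⁻¹ • 1)`, hence positive semidefinite.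
-/

open Matrix

namespace Matrix.PosSemidef

variable {m n : Type*} [Fintype m] [Fintype n]

theorem fromBlocks_smul_smul {R : Type*} [CommRing R] [PartialOrder R] [StarRing R]
    [DecidableEq m] [DecidableEq n]
    {A : Matrix m m R} {X : Matrix m n R} {Y : Matrix n m R} {B : Matrix n n R}
    (hJ : (fromBlocks A X Y B).PosSemidef) {a b : R} (ha : IsSelfAdjoint a)
    (hb : IsSelfAdjoint b) :
    (fromBlocks ((a * a) • A) ((a * b) • X) ((a * b) • Y) ((b * b) • B)).PosSemidef := by
  convert hJ.mul_mul_conjTranspose_same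
    (fromBlocks (a • 1 : Matrix m m R) 0 0 (b • 1 : Matrix n n R)) using 1
  simp [fromBlocks_conjTranspose, fromBlocks_multiply, ha.star_eq, hb.star_eq, smul_smul,
    mul_comm]

theorem fromBlocks_smul_neg_neg_inv_smul
    {A : Matrix m m ℝ} {X : Matrix m n ℝ} {Y : Matrix n m ℝ} {B : Matrix n n ℝ}
    (hJ : (fromBlocks A X Y B).PosSemidef) {t : ℝ} (ht : 0 < t) :
    (fromBlocks (t • A) (-X) (-Y) (t⁻¹ • B)).PosSemidef := by
  classical
  have hsq : √t * √t = t := Real.mul_self_sqrt ht.le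
  have hne : √t ≠ 0 := (Real.sqrt_pos.mpr ht).ne'
  simpa only [hsq, mul_neg, neg_mul, neg_neg, mul_inv_cancel₀ hne, neg_one_smul, ← mul_inv] using
    hJ.fromBlocks_smul_smul (a := √t) (b := -(√t)⁻¹) (.all _) (.all _)

end Matrix.PosSemidef

theorem stmt2_general {n : ℕ} (A B X : Matrix (Fin n) (Fin n) ℝ)
    (hJ : (Matrix.fromBlocks A X Xᵀ B).PosSemidef)
    (ω : ℝ) (h0 : 0 < ω) (h1 : ω < 1) :
    (Matrix.fromBlocks ((1 / ω) • A) 0 0 ((1 / (1 - ω)) • B)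
      - Matrix.fromBlocks A X Xᵀ B).PosSemidef := by
  have hω : 0 < 1 - ω := sub_pos.mpr h1
  have hdiff : fromBlocks ((1 / ω) • A) 0 0 ((1 / (1 - ω)) • B) - fromBlocks A X Xᵀ B
      = fromBlocks (((1 - ω) / ω) • A) (-X) (-Xᵀ) (((1 - ω) / ω)⁻¹ • B) := by
    rw [sub_eq_add_neg, fromBlocks_neg, fromBlocks_add, zero_add, zero_add]
    congr 1 <;> match_scalars <;> field_simp <;> ring
  rw [hdiff]
  exact hJ.fromBlocks_smul_neg_neg_inv_smul (div_pos hω h0)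

theorem stmt2 {n : ℕ} (A B X : Matrix (Fin n) (Fin n) ℝ)
    (hA : A.PosDef) (hB : B.PosDef)
    (hJ : (Matrix.fromBlocks A X Xᵀ B).PosSemidef)
    (ω : ℝ) (h0 : 0 < ω) (h1 : ω < 1) :
    (Matrix.fromBlocks ((1 / ω) • A) 0 0 ((1 / (1 - ω)) • B)
      - Matrix.fromBlocks A X Xᵀ B).PosSemidef :=
  stmt2_general A B X hJ ω h0 h1
end

section
/- Let A₁,…,A_m be symmetric positive definite n×n matrices, and let M be a symmetric mn×mn PSD matrix whose i-th diagonal n×n block equals A_i. If ω₁,…,ω_m are positive reals with ∑ᵢ ωᵢ = 1, then the block diagonal matrix with blocks (1/ωᵢ)Aᵢ satisfies diag((1/ω₁)A₁, …, (1/ω_m)A_m) ⪰ M. -/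
/-!
The quadratic form `q x = xᵀ M x` of a positive semidefinite `M` is convex. Split `x` into its
block components `x = ∑ xᵢ` and apply Jensen's inequality with weights `ωᵢ` at the points
`xᵢ / ωᵢ`: this gives `q x ≤ ∑ ωᵢ⁻¹ q xᵢ`. Since `xᵢ` lives in the `i`-th block only,
`q xᵢ` involves only the diagonal block `Aᵢ` of `M`, and the right-hand side is the quadratic
form of `blockDiagonal (ωᵢ⁻¹ Aᵢ)`.
-/

open Matrix

section QuadraticForm

variable {κ : Type*} [Fintype κ] {M : Matrix κ κ ℝ}

lemma Matrix.IsSymm.dotProduct_mulVec_comm {R : Type*} [CommSemiring R] {N : Matrix κ κ R}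
    (hN : N.IsSymm) (x y : κ → R) : y ⬝ᵥ N *ᵥ x = x ⬝ᵥ N *ᵥ y := by
  rw [dotProduct_mulVec, ← mulVec_transpose, hN.eq, dotProduct_comm]

lemma Matrix.PosSemidef.convexOn_dotProduct_mulVec (hM : M.PosSemidef) :
    ConvexOn ℝ Set.univ fun x : κ → ℝ => x ⬝ᵥ M *ᵥ x := by
  refine ⟨convex_univ, fun x _ y _ a b ha hb hab => ?_⟩
  have hsymm : M.IsSymm := (conjTranspose_eq_transpose_of_trivial M).symm.trans hM.1
  have hxy := hsymm.dotProduct_mulVec_comm x y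
  have hdiff := hM.dotProduct_mulVec_nonneg (x - y)
  simp only [star_trivial, mulVec_add, mulVec_sub, mulVec_smul, dotProduct_add, add_dotProduct,
    dotProduct_sub, sub_dotProduct, dotProduct_smul, smul_dotProduct, smul_eq_mul] at hdiff ⊢
  -- for `a + b = 1`: `a q x + b q y - q (a x + b y) = a b q (x - y)`
  obtain rfl : b = 1 - a := by linarith
  nlinarith [mul_nonneg ha hb]

lemma Matrix.PosSemidef.dotProduct_mulVec_sum_le {ι : Type*} [Fintype ι] (hM : M.PosSemidef)
    (v : ι → κ → ℝ) {ω : ι → ℝ} (hω : ∀ i, 0 < ω i) (hsum : ∑ i, ω i = 1) :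
    (∑ i, v i) ⬝ᵥ M *ᵥ (∑ i, v i) ≤ ∑ i, (ω i)⁻¹ * (v i ⬝ᵥ M *ᵥ v i) := by
  have hjensen := hM.convexOn_dotProduct_mulVec.map_sum_le (t := Finset.univ)
    (fun i _ => (hω i).le) hsum (p := fun i => (ω i)⁻¹ • v i) (fun i _ => Set.mem_univ _)
  have hv : ∀ i, ω i • (ω i)⁻¹ • v i = v i := fun i => by
    rw [smul_smul, mul_inv_cancel₀ (hω i).ne', one_smul]
  simp only [hv] at hjensen
  refine hjensen.trans_eq (Finset.sum_congr rfl fun i _ => ?_)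
  simp only [mulVec_smul, dotProduct_smul, smul_dotProduct, smul_eq_mul]
  field_simp [(hω i).ne']

end QuadraticForm

section Blocks

variable {κ ι R : Type*} [Fintype ι] [DecidableEq ι] [CommSemiring R]

def blockPart (x : κ × ι → R) (i : ι) : κ × ι → R := fun p => if p.2 = i then x p else 0

lemma sum_blockPart (x : κ × ι → R) : ∑ i, blockPart x i = x := by
  ext p
  simp [blockPart, Finset.sum_apply]

variable [Fintype κ]

lemma blockPart_dotProduct_mulVec_blockPart (N : Matrix (κ × ι) (κ × ι) R) (x : κ × ι → R)
    (i : ι) : blockPart x i ⬝ᵥ N *ᵥ blockPart x i =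
      (fun k => x (k, i)) ⬝ᵥ N.submatrix (·, i) (·, i) *ᵥ fun k => x (k, i) := by
  simp [blockPart, dotProduct, mulVec, Fintype.sum_prod_type, ite_mul, mul_ite]

lemma dotProduct_blockDiagonal_mulVec (B : ι → Matrix κ κ R) (x : κ × ι → R) :
    x ⬝ᵥ blockDiagonal B *ᵥ x = ∑ i, (fun k => x (k, i)) ⬝ᵥ B i *ᵥ fun k => x (k, i) := by
  simp [dotProduct, mulVec, blockDiagonal_apply, Fintype.sum_prod_type_right]

end Blocks

theorem stmt3_general {n m : ℕ} (A : Fin m → Matrix (Fin n) (Fin n) ℝ)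
    (M : Matrix (Fin n × Fin m) (Fin n × Fin m) ℝ)
    (hM : M.PosSemidef)
    (hdiag : ∀ i k l, M (k, i) (l, i) = A i k l)
    (ω : Fin m → ℝ) (hω : ∀ i, 0 < ω i) (hsum : ∑ i, ω i = 1) :
    (Matrix.blockDiagonal (fun i => (1 / ω i) • A i) - M).PosSemidef := by
  have hblock : ∀ i, M.submatrix (·, i) (·, i) = A i := fun i => by ext k l; exact hdiag i k l
  have hA : ∀ i, (A i).IsHermitian := fun i => hblock i ▸ hM.1.submatrix _
  have hD : (blockDiagonal fun i => (1 / ω i) • A i).IsHermitian :=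
    isHermitian_blockDiagonal_iff.2 fun i => (hA i).smul (.all _)
  refine .of_dotProduct_mulVec_nonneg (hD.sub hM.1) fun x => ?_
  have hjensen := hM.dotProduct_mulVec_sum_le (blockPart x) hω hsum
  rw [sum_blockPart] at hjensen
  simp only [star_trivial, sub_mulVec, dotProduct_sub, sub_nonneg, dotProduct_blockDiagonal_mulVec,
    smul_mulVec, dotProduct_smul, smul_eq_mul, one_div]
  simpa [blockPart_dotProduct_mulVec_blockPart, hblock] using hjensen

theorem stmt3 {n m : ℕ} (A : Fin m → Matrix (Fin n) (Fin n) ℝ)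
    (hA : ∀ i, (A i).PosDef)
    (M : Matrix (Fin n × Fin m) (Fin n × Fin m) ℝ)
    (hM : M.PosSemidef)
    (hdiag : ∀ i k l, M (k, i) (l, i) = A i k l)
    (ω : Fin m → ℝ) (hω : ∀ i, 0 < ω i) (hsum : ∑ i, ω i = 1) :
    (Matrix.blockDiagonal (fun i => (1 / ω i) • A i) - M).PosSemidef :=
  stmt3_general A M hM hdiag ω hω hsum
end

section
/- Let A be symmetric positive definite, x ∈ ℝⁿ, and ω ∈ (0,1). Then (1/ω)A + (1/(1−ω))xxᵀ ⪰ A + xxᵀ + s(xvᵀ + vxᵀ) for all v with vᵀA⁻¹v ≤ 1 and all s ∈ [−1,1]; equivalently, (1/ω)A + (1/(1−ω))xxᵀ − (A + xxᵀ) − (xvᵀ + vxᵀ) ⪰ 0 for all v with vᵀA⁻¹v ≤ 1. -/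
open Matrix

lemma cs_psd {n : ℕ} {A : Matrix (Fin n) (Fin n) ℝ} (hA : A.PosSemidef)
    (w z : Fin n → ℝ) :
    (w ⬝ᵥ (A *ᵥ z)) ^ 2 ≤ (w ⬝ᵥ (A *ᵥ w)) * (z ⬝ᵥ (A *ᵥ z)) := by
  have hsym : ∀ u t : Fin n → ℝ, u ⬝ᵥ (A *ᵥ t) = t ⬝ᵥ (A *ᵥ u) := by
    intro u t
    rw [dotProduct_mulVec, ← mulVec_transpose, show Aᵀ = A from hA.1.eq, dotProduct_comm]
  have key : ∀ t : ℝ, 0 ≤ (w ⬝ᵥ (A *ᵥ w)) * (t * t)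
      + (2 * (w ⬝ᵥ (A *ᵥ z))) * t + (z ⬝ᵥ (A *ᵥ z)) := by
    intro t
    have h0 := hA.dotProduct_mulVec_nonneg (z + t • w)
    simp only [star_trivial] at h0
    simp only [mulVec_add, mulVec_smul, dotProduct_add, add_dotProduct,
      smul_dotProduct, dotProduct_smul, smul_eq_mul] at h0
    have h1 : w ⬝ᵥ (A *ᵥ z) = z ⬝ᵥ (A *ᵥ w) := hsym w z
    have h2 : z ⬝ᵥ (A *ᵥ z) + t * (w ⬝ᵥ (A *ᵥ z))
        + t * ((z ⬝ᵥ (A *ᵥ w)) + t * (w ⬝ᵥ (A *ᵥ w)))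
        = (w ⬝ᵥ (A *ᵥ w)) * (t * t) + (2 * (w ⬝ᵥ (A *ᵥ z))) * t + z ⬝ᵥ (A *ᵥ z) := by
      rw [h1]; ring
    linarith [h0, h2.le, h2.ge]
  have hd := discrim_le_zero key
  rw [discrim] at hd
  nlinarith [hd]

theorem stmt6 {n : ℕ} (A : Matrix (Fin n) (Fin n) ℝ) (hA : A.PosDef)
    (x : Fin n → ℝ) (ω : ℝ) (h0 : 0 < ω) (h1 : ω < 1) :
    ∀ v : Fin n → ℝ, v ⬝ᵥ (A⁻¹ *ᵥ v) ≤ 1 →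
      ((1 / ω) • A + (1 / (1 - ω)) • Matrix.vecMulVec x x
        - (A + Matrix.vecMulVec x x)
        - (Matrix.vecMulVec x v + Matrix.vecMulVec v x)).PosSemidef := by
  intro v hv
  have hdet : IsUnit A.det := isUnit_iff_ne_zero.2 hA.det_pos.ne'
  have hAAinv : A * A⁻¹ = 1 := Matrix.mul_nonsing_inv A hdet
  set w : Fin n → ℝ := A⁻¹ *ᵥ v with hw
  have hvw : A *ᵥ w = v := by
    rw [hw, mulVec_mulVec, hAAinv, one_mulVec]
  have hsym : ∀ u t : Fin n → ℝ, u ⬝ᵥ (A *ᵥ t) = t ⬝ᵥ (A *ᵥ u) := by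
    intro u t
    rw [dotProduct_mulVec, ← mulVec_transpose]
    rw [show Aᵀ = A from hA.1.eq, dotProduct_comm]
  have hwAw : w ⬝ᵥ (A *ᵥ w) ≤ 1 := by
    have : v ⬝ᵥ (A⁻¹ *ᵥ v) = w ⬝ᵥ (A *ᵥ w) := by
      rw [← hw]
      conv_lhs => rw [← hvw]
      rw [dotProduct_comm]
    linarith [hv, this]
  refine Matrix.PosSemidef.of_dotProduct_mulVec_nonneg ?_ ?_
  · -- Hermitian
    have hAsym : A.IsHermitian := hA.1
    unfold Matrix.IsHermitian
    ext i j
    simp [Matrix.conjTranspose_apply, Matrix.sub_apply, Matrix.add_apply,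
      Matrix.smul_apply, Matrix.vecMulVec_apply, smul_eq_mul]
    have := congrFun (congrFun hAsym.eq j) i
    simp [Matrix.conjTranspose_apply] at this
    ring_nf
    rw [this]
    ring
  · intro z
    simp only [star_trivial]
    have hexp : z ⬝ᵥ (((1 / ω) • A + (1 / (1 - ω)) • Matrix.vecMulVec x x
        - (A + Matrix.vecMulVec x x)
        - (Matrix.vecMulVec x v + Matrix.vecMulVec v x)) *ᵥ z)
        = (1/ω - 1) * (z ⬝ᵥ (A *ᵥ z)) + (1/(1-ω) - 1) * (x ⬝ᵥ z)^2
          - 2 * (x ⬝ᵥ z) * (v ⬝ᵥ z) := by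
      simp only [Matrix.sub_mulVec, Matrix.add_mulVec, Matrix.smul_mulVec,
        dotProduct_sub, dotProduct_add, dotProduct_smul, smul_eq_mul]
      have hvmv : ∀ a b : Fin n → ℝ, z ⬝ᵥ (Matrix.vecMulVec a b *ᵥ z)
          = (z ⬝ᵥ a) * (b ⬝ᵥ z) := by
        intro a b
        simp [Matrix.vecMulVec, Matrix.mulVec, dotProduct, Finset.mul_sum,
          Finset.sum_mul, mul_assoc, mul_comm, mul_left_comm, Matrix.of_apply]
        rw [Finset.sum_comm]
        apply Finset.sum_congr rfl; intros
        apply Finset.sum_congr rfl; intros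
        ring
      rw [hvmv x x, hvmv x v, hvmv v x]
      rw [dotProduct_comm z x, dotProduct_comm z v]
      ring
    rw [hexp]
    -- Cauchy-Schwarz bound
    have hqA : 0 ≤ z ⬝ᵥ (A *ᵥ z) := by
      have := hA.posSemidef.dotProduct_mulVec_nonneg z; simpa only [star_trivial] using this
    have hpv2 : (v ⬝ᵥ z) ^ 2 ≤ z ⬝ᵥ (A *ᵥ z) := by
      have hcs := cs_psd hA.posSemidef w z
      have : w ⬝ᵥ (A *ᵥ z) = v ⬝ᵥ z := by
        rw [← hvw, hsym w z, dotProduct_comm]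
      rw [this] at hcs
      calc (v ⬝ᵥ z) ^ 2 ≤ (w ⬝ᵥ (A *ᵥ w)) * (z ⬝ᵥ (A *ᵥ z)) := hcs
        _ ≤ 1 * (z ⬝ᵥ (A *ᵥ z)) := by
            apply mul_le_mul_of_nonneg_right hwAw hqA
        _ = z ⬝ᵥ (A *ᵥ z) := one_mul _
    set a : ℝ := 1/ω - 1 with ha
    set b : ℝ := 1/(1-ω) - 1 with hb
    have hapos : 0 < a := by
      rw [ha]; rw [lt_sub_iff_add_lt, zero_add, lt_div_iff₀ h0, one_mul]; exact h1
    have hbpos : 0 < b := by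
      rw [hb]
      have h1ω : 0 < 1 - ω := by linarith
      rw [lt_sub_iff_add_lt, zero_add, lt_div_iff₀ h1ω]; nlinarith
    have hab : a * b = 1 := by
      have hωne : ω ≠ 0 := h0.ne'
      have h1ωne : (1:ℝ) - ω ≠ 0 := by linarith
      rw [ha, hb]
      field_simp
      ring
    nlinarith [sq_nonneg (a * (v ⬝ᵥ z) - (x ⬝ᵥ z)), hpv2, hapos.le, hbpos.le,
      mul_le_mul_of_nonneg_left hpv2 hapos.le, sq_nonneg (v ⬝ᵥ z - x ⬝ᵥ z)]
end

section
/- Let A and U be symmetric positive definite n×n matrices and u ∈ ℝⁿ. If the ellipsoid E(u,U) = {x : (x−u)ᵀU⁻¹(x−u) ≤ 1} contains the ellipsoid E(0,A) = {x : xᵀA⁻¹x ≤ 1}, then there exists ω ∈ (0,1] with either (ω = 1 and u = 0 and U ⪰ A) or (ω ∈ (0,1) and U ⪰ (1/ω)A + (1/(1−ω))uuᵀ). -/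
open Matrix

section Aux

variable {n : ℕ}

private lemma herm_transpose {M : Matrix (Fin n) (Fin n) ℝ} (hM : M.IsHermitian) : Mᵀ = M := by
  have h : M.IsSymm := by simpa [Matrix.conjTranspose_eq_transpose_of_trivial] using hM
  exact h.eq

private lemma mk_psd {M : Matrix (Fin n) (Fin n) ℝ} (h1 : Mᵀ = M)
    (h2 : ∀ x : Fin n → ℝ, 0 ≤ x ⬝ᵥ (M *ᵥ x)) : M.PosSemidef :=
  PosSemidef.of_dotProduct_mulVec_nonneg ((Matrix.conjTranspose_eq_transpose_of_trivial M).trans h1)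
    (fun x => by simpa using h2 x)

private lemma dot_swap {M : Matrix (Fin n) (Fin n) ℝ} (hM : Mᵀ = M) (x y : Fin n → ℝ) :
    x ⬝ᵥ (M *ᵥ y) = y ⬝ᵥ (M *ᵥ x) := by
  rw [dotProduct_mulVec, ← mulVec_transpose, hM, dotProduct_comm]

private lemma psd_nonneg {M : Matrix (Fin n) (Fin n) ℝ} (hM : M.PosSemidef) (x : Fin n → ℝ) :
    0 ≤ x ⬝ᵥ (M *ᵥ x) := by simpa using hM.dotProduct_mulVec_nonneg x

private lemma pd_pos {M : Matrix (Fin n) (Fin n) ℝ} (hM : M.PosDef) {x : Fin n → ℝ} (hx : x ≠ 0) :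
    0 < x ⬝ᵥ (M *ᵥ x) := by simpa using hM.dotProduct_mulVec_pos hx

private lemma psd_CS {M : Matrix (Fin n) (Fin n) ℝ} (hM : M.PosSemidef) (x y : Fin n → ℝ) :
    (x ⬝ᵥ (M *ᵥ y))^2 ≤ (x ⬝ᵥ (M *ᵥ x)) * (y ⬝ᵥ (M *ᵥ y)) := by
  have hsym := herm_transpose hM.1
  have key : ∀ t : ℝ, 0 ≤ (y ⬝ᵥ (M *ᵥ y)) * (t * t) + (2 * (x ⬝ᵥ (M *ᵥ y))) * t
      + (x ⬝ᵥ (M *ᵥ x)) := by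
    intro t
    have h0 := psd_nonneg hM (x + t • y)
    have expand : (x + t • y) ⬝ᵥ (M *ᵥ (x + t • y)) =
        (y ⬝ᵥ (M *ᵥ y)) * (t * t) + (2 * (x ⬝ᵥ (M *ᵥ y))) * t + (x ⬝ᵥ (M *ᵥ x)) := by
      rw [mulVec_add, mulVec_smul, dotProduct_add, add_dotProduct, add_dotProduct,
        dotProduct_smul, smul_dotProduct, dotProduct_smul, smul_dotProduct]
      have : y ⬝ᵥ (M *ᵥ x) = x ⬝ᵥ (M *ᵥ y) := dot_swap hsym y x
      simp only [smul_eq_mul, this]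
      ring
    linarith [h0, expand ▸ h0]
  have hd := discrim_le_zero key
  rw [discrim] at hd
  nlinarith [hd]

private lemma psd_kernel {M : Matrix (Fin n) (Fin n) ℝ} (hM : M.PosSemidef) {x : Fin n → ℝ}
    (hx : x ⬝ᵥ (M *ᵥ x) = 0) : M *ᵥ x = 0 :=
  (hM.dotProduct_mulVec_zero_iff x).mp (by simpa using hx)

private lemma alg_right {p q w w' : ℝ} (h1 : 0 < w) (h2 : w < w') (h3 : w' < 1)
    (hraw : p / w + q / (1 - w) ≤ p / w' + q / (1 - w')) :
    p * ((1 - w') * (1 - w)) ≤ q * (w' * w) := by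
  have hw1 : (0:ℝ) < 1 - w := by linarith
  have hw'0 : (0:ℝ) < w' := by linarith
  have hw'1 : (0:ℝ) < 1 - w' := by linarith
  rw [div_add_div _ _ (ne_of_gt h1) (ne_of_gt hw1),
    div_add_div _ _ (ne_of_gt hw'0) (ne_of_gt hw'1),
    div_le_div_iff₀ (by positivity) (by positivity)] at hraw
  have hd : (0:ℝ) < w' - w := by linarith
  nlinarith [hraw, hd]

private lemma alg_left {p q w w' : ℝ} (h1 : 0 < w') (h2 : w' < w) (h3 : w < 1)
    (hraw : p / w + q / (1 - w) ≤ p / w' + q / (1 - w')) :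
    q * (w' * w) ≤ p * ((1 - w') * (1 - w)) := by
  have hw1 : (0:ℝ) < 1 - w := by linarith
  have hw0 : (0:ℝ) < w := by linarith
  have hw'1 : (0:ℝ) < 1 - w' := by linarith
  rw [div_add_div _ _ (ne_of_gt hw0) (ne_of_gt hw1),
    div_add_div _ _ (ne_of_gt h1) (ne_of_gt hw'1),
    div_le_div_iff₀ (by positivity) (by positivity)] at hraw
  have hd : (0:ℝ) < w - w' := by linarith
  nlinarith [hraw, hd]

private lemma mul_vecMulVec_mul (M N : Matrix (Fin n) (Fin n) ℝ) (a b : Fin n → ℝ) :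
    M * vecMulVec a b * N = vecMulVec (M *ᵥ a) (Nᵀ *ᵥ b) := by
  ext i j
  simp only [mul_apply, vecMulVec_apply, mulVec, dotProduct, transpose_apply, Finset.sum_mul]
  rw [Finset.sum_comm]
  refine Finset.sum_congr rfl fun l _ => ?_
  rw [Finset.mul_sum]
  exact Finset.sum_congr rfl fun k _ => by ring

private lemma vecMulVec_mulVec_eq (v y : Fin n → ℝ) :
    vecMulVec v v *ᵥ y = (v ⬝ᵥ y) • v := by
  ext i
  simp only [mulVec, vecMulVec_apply, dotProduct, Pi.smul_apply, smul_eq_mul, Finset.sum_mul]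
  exact Finset.sum_congr rfl fun j _ => by ring

private lemma support_ineq (A U : Matrix (Fin n) (Fin n) ℝ)
    (hA : A.PosDef) (hU : U.PosDef) (u : Fin n → ℝ)
    (hsub : {x : Fin n → ℝ | x ⬝ᵥ (A⁻¹ *ᵥ x) ≤ 1} ⊆
      {x : Fin n → ℝ | (x - u) ⬝ᵥ (U⁻¹ *ᵥ (x - u)) ≤ 1}) (z : Fin n → ℝ) :
    Real.sqrt (z ⬝ᵥ (A *ᵥ z)) + |u ⬝ᵥ z| ≤ Real.sqrt (z ⬝ᵥ (U *ᵥ z)) := by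
  have hAdet : IsUnit A.det := isUnit_iff_ne_zero.mpr (ne_of_gt hA.det_pos)
  have hUdet : IsUnit U.det := isUnit_iff_ne_zero.mpr (ne_of_gt hU.det_pos)
  have hUsym : Uᵀ = U := herm_transpose hU.1
  rcases eq_or_ne z 0 with rfl | hz
  · simp
  set s := Real.sqrt (z ⬝ᵥ (A *ᵥ z)) with hs_def
  have hzAz : 0 < z ⬝ᵥ (A *ᵥ z) := by simpa using hA.dotProduct_mulVec_pos hz
  have hs : 0 < s := Real.sqrt_pos.mpr hzAz
  have hs2 : s ^ 2 = z ⬝ᵥ (A *ᵥ z) := Real.sq_sqrt hzAz.le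
  have hzUz : (0:ℝ) ≤ z ⬝ᵥ (U *ᵥ z) := by simpa using hU.posSemidef.dotProduct_mulVec_nonneg z
  have CS : ∀ w : Fin n → ℝ, w ⬝ᵥ (U⁻¹ *ᵥ w) ≤ 1 → |z ⬝ᵥ w| ≤ Real.sqrt (z ⬝ᵥ (U *ᵥ z)) := by
    intro w hw
    have hcs := psd_CS (hU.inv.posSemidef) (U *ᵥ z) w
    have h1 : (U *ᵥ z) ⬝ᵥ (U⁻¹ *ᵥ w) = z ⬝ᵥ w := by
      rw [dotProduct_mulVec, ← mulVec_transpose, transpose_nonsing_inv, hUsym,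
        mulVec_mulVec, nonsing_inv_mul U hUdet, one_mulVec]
    have h2 : (U *ᵥ z) ⬝ᵥ (U⁻¹ *ᵥ (U *ᵥ z)) = z ⬝ᵥ (U *ᵥ z) := by
      rw [mulVec_mulVec, nonsing_inv_mul U hUdet, one_mulVec, dotProduct_comm]
    rw [h1, h2] at hcs
    have hb : (z ⬝ᵥ w)^2 ≤ z ⬝ᵥ (U *ᵥ z) := by
      nlinarith [hzUz]
    calc |z ⬝ᵥ w| = Real.sqrt ((z ⬝ᵥ w)^2) := (Real.sqrt_sq_eq_abs _).symm
    _ ≤ Real.sqrt (z ⬝ᵥ (U *ᵥ z)) := Real.sqrt_le_sqrt hb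
  set x := s⁻¹ • (A *ᵥ z) with hx_def
  have hmem : ∀ (c : ℝ), c = 1 ∨ c = -1 → ((c • x - u) ⬝ᵥ (U⁻¹ *ᵥ (c • x - u)) ≤ 1) := by
    intro c hc
    apply hsub
    have hAx : A⁻¹ *ᵥ (A *ᵥ z) = z := by
      rw [mulVec_mulVec, nonsing_inv_mul A hAdet, one_mulVec]
    have : (c • x) ⬝ᵥ (A⁻¹ *ᵥ (c • x)) = c^2 * (s⁻¹ * s⁻¹) * (z ⬝ᵥ (A *ᵥ z)) := by
      rw [hx_def, smul_smul, smul_dotProduct, mulVec_smul, dotProduct_smul, hAx,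
        dotProduct_comm]
      simp [smul_eq_mul]
      ring
    rw [Set.mem_setOf_eq, this]
    have hc2 : c^2 = 1 := by rcases hc with rfl | rfl <;> norm_num
    rw [hc2, ← hs2, pow_two, one_mul]
    rw [show s⁻¹ * s⁻¹ * (s * s) = (s⁻¹ * s) * (s⁻¹ * s) by ring, inv_mul_cancel₀ hs.ne']
    norm_num
  have hzx : z ⬝ᵥ x = s := by
    rw [hx_def, dotProduct_smul, smul_eq_mul, ← hs2]
    field_simp [pow_two]
  have h1 := CS (x - u) (by simpa using hmem 1 (Or.inl rfl))
  have h2 := CS ((-1 : ℝ) • x - u) (hmem (-1) (Or.inr rfl))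
  have e1 : z ⬝ᵥ (x - u) = s - z ⬝ᵥ u := by rw [dotProduct_sub, hzx]
  have e2 : z ⬝ᵥ ((-1 : ℝ) • x - u) = -s - z ⬝ᵥ u := by
    rw [dotProduct_sub, dotProduct_smul, hzx]; simp [smul_eq_mul]
  rw [e1] at h1; rw [e2] at h2
  have hcomm : u ⬝ᵥ z = z ⬝ᵥ u := dotProduct_comm u z
  rw [hcomm]
  rcases abs_cases (z ⬝ᵥ u) with ⟨ha, _⟩ | ⟨ha, _⟩
  · rcases abs_cases (-s - z ⬝ᵥ u) with ⟨hb, _⟩ | ⟨hb, _⟩ <;> linarith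
  · rcases abs_cases (s - z ⬝ᵥ u) with ⟨hb, _⟩ | ⟨hb, _⟩ <;> linarith

end Aux

set_option maxHeartbeats 2000000 in
theorem stmt9 {n : ℕ} (A U : Matrix (Fin n) (Fin n) ℝ)
    (hA : A.PosDef) (hU : U.PosDef) (u : Fin n → ℝ)
    (hsub : {x : Fin n → ℝ | x ⬝ᵥ (A⁻¹ *ᵥ x) ≤ 1} ⊆
      {x : Fin n → ℝ | (x - u) ⬝ᵥ (U⁻¹ *ᵥ (x - u)) ≤ 1}) :
    ∃ ω : ℝ,
      (ω = 1 ∧ u = 0 ∧ (U - A).PosSemidef) ∨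
      (0 < ω ∧ ω < 1 ∧
        (U - ((1 / ω) • A + (1 / (1 - ω)) • Matrix.vecMulVec u u)).PosSemidef) := by
  have hstar := support_ineq A U hA hU u hsub
  by_cases hu : u = 0
  · subst hu
    refine ⟨1, Or.inl ⟨rfl, rfl, mk_psd (by
        rw [transpose_sub, herm_transpose hU.1, herm_transpose hA.1]) ?_⟩⟩
    intro x
    have h := hstar x
    rw [zero_dotProduct, abs_zero, add_zero] at h
    have hAx : 0 ≤ x ⬝ᵥ (A *ᵥ x) := psd_nonneg hA.posSemidef x
    have hUx : 0 ≤ x ⬝ᵥ (U *ᵥ x) := psd_nonneg hU.posSemidef x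
    have hle : x ⬝ᵥ (A *ᵥ x) ≤ x ⬝ᵥ (U *ᵥ x) := by
      nlinarith [Real.sq_sqrt hAx, Real.sq_sqrt hUx, Real.sqrt_nonneg (x ⬝ᵥ (A *ᵥ x)),
        Real.sqrt_nonneg (x ⬝ᵥ (U *ᵥ x))]
    rw [sub_mulVec, dotProduct_sub]
    linarith
  -- main case : u ≠ 0
  have hUdet : IsUnit U.det := isUnit_iff_ne_zero.mpr (ne_of_gt hU.det_pos)
  open scoped MatrixOrder in set W := CFC.sqrt U with hW_def
  have hWherm : Wᵀ = W :=
    herm_transpose (open scoped MatrixOrder in (CFC.sqrt_nonneg U).posSemidef.1)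
  have hWW : W * W = U :=
    open scoped MatrixOrder in CFC.sqrt_mul_sqrt_self U hU.posSemidef.nonneg
  have hWdet : IsUnit W.det := by
    have h : W.det * W.det = U.det := by rw [← det_mul, hWW]
    exact isUnit_of_mul_isUnit_left (h ▸ hUdet)
  have hWiW : W⁻¹ * W = 1 := nonsing_inv_mul W hWdet
  have hWWi : W * W⁻¹ = 1 := mul_nonsing_inv W hWdet
  have hWisym : W⁻¹ᵀ = W⁻¹ := by rw [transpose_nonsing_inv, hWherm]
  set v := W⁻¹ *ᵥ u with hv_def
  set S := W⁻¹ * A * W⁻¹ with hS_def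
  have hSsym : Sᵀ = S := by
    rw [hS_def, transpose_mul, transpose_mul, hWisym, herm_transpose hA.1, Matrix.mul_assoc]
  have hWv : W *ᵥ v = u := by rw [hv_def, mulVec_mulVec, hWWi, one_mulVec]
  have hvne : v ≠ 0 := fun h => hu (by rw [← hWv, h, mulVec_zero])
  have shift : ∀ x w : Fin n → ℝ, x ⬝ᵥ (W⁻¹ *ᵥ w) = (W⁻¹ *ᵥ x) ⬝ᵥ w := by
    intro x w
    rw [dotProduct_mulVec, ← mulVec_transpose, hWisym]
  set aq : (Fin n → ℝ) → ℝ := fun y => y ⬝ᵥ (S *ᵥ y) with haq_def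
  set bq : (Fin n → ℝ) → ℝ := fun y => (v ⬝ᵥ y)^2 with hbq_def
  have haqA : ∀ y : Fin n → ℝ, aq y = (W⁻¹ *ᵥ y) ⬝ᵥ (A *ᵥ (W⁻¹ *ᵥ y)) := by
    intro y
    rw [haq_def]
    show y ⬝ᵥ ((W⁻¹ * A * W⁻¹) *ᵥ y) = _
    rw [Matrix.mul_assoc, ← mulVec_mulVec, shift, mulVec_mulVec]
  have hstar' : ∀ y : Fin n → ℝ, Real.sqrt (aq y) + |v ⬝ᵥ y| ≤ Real.sqrt (y ⬝ᵥ y) := by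
    intro y
    have h := hstar (W⁻¹ *ᵥ y)
    have e2 : u ⬝ᵥ (W⁻¹ *ᵥ y) = v ⬝ᵥ y := by rw [shift, hv_def]
    have e3 : (W⁻¹ *ᵥ y) ⬝ᵥ (U *ᵥ (W⁻¹ *ᵥ y)) = y ⬝ᵥ y := by
      rw [← shift, mulVec_mulVec, mulVec_mulVec,
        show W⁻¹ * U * W⁻¹ = 1 by
          rw [Matrix.mul_assoc, ← hWW, Matrix.mul_assoc W W W⁻¹, hWWi, Matrix.mul_one, hWiW],
        one_mulVec]
    rw [← haqA y, e2, e3] at h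
    exact h
  -- positivity and scaling facts
  have hdotnn : ∀ y : Fin n → ℝ, 0 ≤ y ⬝ᵥ y := fun y =>
    Finset.sum_nonneg fun i _ => mul_self_nonneg _
  have hdotpos : ∀ y : Fin n → ℝ, y ≠ 0 → 0 < y ⬝ᵥ y := fun y hy =>
    (hdotnn y).lt_of_ne fun h => hy (dotProduct_self_eq_zero.mp h.symm)
  have haq_pos : ∀ y : Fin n → ℝ, y ≠ 0 → 0 < aq y := by
    intro y hy
    have hWy : W *ᵥ (W⁻¹ *ᵥ y) = y := by rw [mulVec_mulVec, hWWi, one_mulVec]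
    have hz : W⁻¹ *ᵥ y ≠ 0 := fun h => hy (by rw [← hWy, h, mulVec_zero])
    rw [haqA]
    exact pd_pos hA hz
  have haq_nonneg : ∀ y, 0 ≤ aq y := by
    intro y
    rcases eq_or_ne y 0 with rfl | hy
    · simp [haq_def]
    · exact (haq_pos y hy).le
  have hbq_nonneg : ∀ y, 0 ≤ bq y := fun y => sq_nonneg _
  have haq_smul : ∀ (c : ℝ) (y : Fin n → ℝ), aq (c • y) = c^2 * aq y := by
    intro c y
    show (c • y) ⬝ᵥ (S *ᵥ (c • y)) = c^2 * (y ⬝ᵥ (S *ᵥ y))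
    rw [mulVec_smul, dotProduct_smul, smul_dotProduct]
    simp only [smul_eq_mul]
    ring
  have hbq_smul : ∀ (c : ℝ) (y : Fin n → ℝ), bq (c • y) = c^2 * bq y := by
    intro c y
    show (v ⬝ᵥ (c • y))^2 = c^2 * (v ⬝ᵥ y)^2
    rw [dotProduct_smul]
    simp only [smul_eq_mul]
    ring
  -- the sphere
  set Sph : Set (Fin n → ℝ) := {y | y ⬝ᵥ y = 1} with hSph_def
  have hSphClosed : IsClosed Sph :=
    isClosed_eq (continuous_id.dotProduct continuous_id) continuous_const
  have hSphC : IsCompact Sph := by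
    apply (isCompact_closedBall (0 : Fin n → ℝ) 1).of_isClosed_subset hSphClosed
    intro y hy
    have hy' : y ⬝ᵥ y = 1 := hy
    rw [Metric.mem_closedBall, dist_zero_right]
    refine (pi_norm_le_iff_of_nonneg zero_le_one).mpr fun i => ?_
    rw [Real.norm_eq_abs, abs_le_one_iff_mul_self_le_one]
    calc y i * y i ≤ ∑ j, y j * y j :=
          Finset.single_le_sum (f := fun j => y j * y j)
            (fun j _ => mul_self_nonneg _) (Finset.mem_univ i)
    _ = y ⬝ᵥ y := rfl
    _ = 1 := hy'
  have hnorm_mem : ∀ y : Fin n → ℝ, y ≠ 0 → ((Real.sqrt (y ⬝ᵥ y))⁻¹ • y) ∈ Sph := by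
    intro y hy
    have h0 : 0 < y ⬝ᵥ y := hdotpos y hy
    show ((Real.sqrt (y ⬝ᵥ y))⁻¹ • y) ⬝ᵥ ((Real.sqrt (y ⬝ᵥ y))⁻¹ • y) = 1
    rw [smul_dotProduct, dotProduct_smul, smul_eq_mul, smul_eq_mul, ← mul_assoc, ← mul_inv,
      Real.mul_self_sqrt h0.le, inv_mul_cancel₀ (ne_of_gt h0)]
  have hSphNe : Sph.Nonempty := ⟨_, hnorm_mem v hvne⟩
  -- the functions
  set Phi : ℝ → (Fin n → ℝ) → ℝ := fun w y => aq y / w + bq y / (1 - w) with hPhi_def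
  have haq_cont : Continuous aq := by
    rw [haq_def]
    exact continuous_id.dotProduct (continuous_const.matrix_mulVec continuous_id)
  have hbq_cont : Continuous bq := by
    rw [hbq_def]
    exact (continuous_const.dotProduct continuous_id).pow 2
  have hPhicont : ∀ w, Continuous (Phi w) := by
    intro w
    rw [hPhi_def]
    exact (haq_cont.div_const _).add (hbq_cont.div_const _)
  set F : ℝ → ℝ := fun w => sSup (Phi w '' Sph) with hF_def
  have hbdd : ∀ w, BddAbove (Phi w '' Sph) := fun w =>
    hSphC.bddAbove_image (hPhicont w).continuousOn
  have hFle : ∀ w, ∀ y ∈ Sph, Phi w y ≤ F w := by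
    intro w y hy
    exact le_csSup (hbdd w) ⟨y, hy, rfl⟩
  have hFmax : ∀ w, ∃ y ∈ Sph, F w = Phi w y := by
    intro w
    obtain ⟨y, hy, h⟩ := hSphC.exists_sSup_image_eq hSphNe (hPhicont w).continuousOn
    exact ⟨y, hy, h⟩
  clear_value W v S aq bq Phi F
  clear hstar hsub
  -- uniform bounds on the sphere
  obtain ⟨yA, hyAS, hyAmax⟩ := hSphC.exists_isMaxOn hSphNe haq_cont.continuousOn
  obtain ⟨yB, hyBS, hyBmax⟩ := hSphC.exists_isMaxOn hSphNe hbq_cont.continuousOn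
  set CA := aq yA with hCA_def
  set CB := bq yB with hCB_def
  have hCA : ∀ y ∈ Sph, aq y ≤ CA := fun y hy => hyAmax hy
  have hCB : ∀ y ∈ Sph, bq y ≤ CB := fun y hy => hyBmax hy
  have hCA0 : 0 ≤ CA := haq_nonneg yA
  have hCB0 : 0 ≤ CB := hbq_nonneg yB
  -- the minimum point on the sphere and the direction of v
  obtain ⟨ya, hyaS, hyamin⟩ := hSphC.exists_isMinOn hSphNe haq_cont.continuousOn
  set al := aq ya with hal_def
  have hal : ∀ y ∈ Sph, al ≤ aq y := fun y hy => hyamin hy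
  have hal_pos : 0 < al := by
    apply haq_pos
    intro h
    rw [h] at hyaS
    have : (0 : Fin n → ℝ) ⬝ᵥ 0 = 1 := hyaS
    rw [zero_dotProduct] at this
    norm_num at this
  set vhat := (Real.sqrt (v ⬝ᵥ v))⁻¹ • v with hvhat_def
  have hvhatS : vhat ∈ Sph := hnorm_mem v hvne
  set be := bq vhat with hbe_def
  have hbe_pos : 0 < be := by
    have h0 : 0 < v ⬝ᵥ v := hdotpos v hvne
    have h1 : v ⬝ᵥ vhat = (Real.sqrt (v ⬝ᵥ v))⁻¹ * (v ⬝ᵥ v) := by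
      rw [hvhat_def, dotProduct_smul, smul_eq_mul]
    have h2 : 0 < v ⬝ᵥ vhat := by
      rw [h1]
      have := Real.sqrt_pos.mpr h0
      positivity
    simp only [hbe_def, hbq_def]
    exact pow_pos h2 2
  -- choice of epsilon
  set C := F (1/2 : ℝ) with hCdef
  have hC0 : 0 ≤ C := by
    refine le_trans ?_ (hFle (1/2) vhat hvhatS)
    rw [hPhi_def]
    have := haq_nonneg vhat
    have := hbq_nonneg vhat
    norm_num
    positivity
  set eps := min (min al be / (C + 1)) (1/4 : ℝ) with heps_def
  have heps_pos : 0 < eps := by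
    apply lt_min
    · have : 0 < min al be := lt_min hal_pos hbe_pos
      positivity
    · norm_num
  have heps4 : eps ≤ 1/4 := min_le_right _ _
  have hepsC : ∀ x, 0 < x → x ≤ eps → C + 1 ≤ min al be / x := by
    intro x hx hxe
    rw [le_div_iff₀ hx]
    have h1 : x ≤ min al be / (C + 1) := le_trans hxe (min_le_left _ _)
    have hC1 : (0:ℝ) < C + 1 := by linarith
    calc (C + 1) * x ≤ (C + 1) * (min al be / (C + 1)) := by
          apply mul_le_mul_of_nonneg_left h1 hC1.le
    _ = min al be := by field_simp
  -- F at the endpoints is big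
  have hFeps_low : C + 1 ≤ F eps := by
    refine le_trans ?_ (hFle eps ya hyaS)
    rw [hPhi_def]
    have h1 : C + 1 ≤ al / eps := by
      refine le_trans (hepsC eps heps_pos le_rfl) ?_
      gcongr
      exact min_le_left _ _
    have h2 : 0 ≤ bq ya / (1 - eps) := by
      apply div_nonneg (hbq_nonneg ya)
      linarith
    simp only []
    rw [← hal_def]
    linarith
  have hFeps_high : C + 1 ≤ F (1 - eps) := by
    refine le_trans ?_ (hFle (1 - eps) vhat hvhatS)
    rw [hPhi_def]
    have h1 : C + 1 ≤ be / eps := by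
      refine le_trans (hepsC eps heps_pos le_rfl) ?_
      gcongr
      exact min_le_right _ _
    have h2 : 0 ≤ aq vhat / (1 - eps) := by
      apply div_nonneg (haq_nonneg vhat)
      linarith
    simp only [show (1:ℝ) - (1 - eps) = eps by ring]
    rw [← hbe_def]
    linarith
  -- Lipschitz property of Phi and F on [eps, 1-eps]
  set L := CA / eps^2 + CB / eps^2 with hL_def
  have hL0 : 0 ≤ L := by positivity
  have hIcc : ∀ w ∈ Set.Icc eps (1 - eps), 0 < w ∧ w < 1 := by
    intro w hw
    constructor
    · linarith [hw.1]
    · linarith [hw.2]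
  have hPhiLip : ∀ w ∈ Set.Icc eps (1 - eps), ∀ w' ∈ Set.Icc eps (1 - eps), ∀ y ∈ Sph,
      Phi w y ≤ Phi w' y + L * |w - w'| := by
    intro w hw w' hw' y hy
    obtain ⟨hw0, hw1⟩ := hIcc w hw
    obtain ⟨hw'0, hw'1⟩ := hIcc w' hw'
    have d1 : aq y / w - aq y / w' = aq y * (w' - w) / (w * w') := by
      field_simp
    have d2 : bq y / (1 - w) - bq y / (1 - w') = bq y * (w - w') / ((1 - w) * (1 - w')) := by
      have e1 : (1:ℝ) - w ≠ 0 := by linarith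
      have e2 : (1:ℝ) - w' ≠ 0 := by linarith
      field_simp
      ring
    have b1 : aq y * (w' - w) / (w * w') ≤ CA / eps^2 * |w - w'| := by
      rw [div_le_iff₀ (by positivity : (0:ℝ) < w * w')]
      have hnum : aq y * (w' - w) ≤ CA * |w - w'| := by
        have := hCA y hy
        have := haq_nonneg y
        have h3 : w' - w ≤ |w - w'| := by
          rw [abs_sub_comm]
          exact le_abs_self _
        nlinarith [abs_nonneg (w - w')]
      have hden : eps^2 ≤ w * w' := by
        have := hw.1; have := hw'.1
        nlinarith [heps_pos]
      calc aq y * (w' - w) ≤ CA * |w - w'| := hnum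
      _ = CA / eps^2 * |w - w'| * eps^2 := by field_simp
      _ ≤ CA / eps^2 * |w - w'| * (w * w') := by
          apply mul_le_mul_of_nonneg_left hden
          positivity
    have b2 : bq y * (w - w') / ((1 - w) * (1 - w')) ≤ CB / eps^2 * |w - w'| := by
      rw [div_le_iff₀ (by nlinarith : (0:ℝ) < (1 - w) * (1 - w'))]
      have hnum : bq y * (w - w') ≤ CB * |w - w'| := by
        have := hCB y hy
        have := hbq_nonneg y
        have h3 : w - w' ≤ |w - w'| := le_abs_self _
        nlinarith [abs_nonneg (w - w')]
      have hden : eps^2 ≤ (1 - w) * (1 - w') := by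
        have := hw.2; have := hw'.2
        nlinarith [heps_pos]
      calc bq y * (w - w') ≤ CB * |w - w'| := hnum
      _ = CB / eps^2 * |w - w'| * eps^2 := by field_simp
      _ ≤ CB / eps^2 * |w - w'| * ((1 - w) * (1 - w')) := by
          apply mul_le_mul_of_nonneg_left hden
          positivity
    have hsplit : Phi w y = Phi w' y + (aq y * (w' - w) / (w * w'))
        + (bq y * (w - w') / ((1 - w) * (1 - w'))) := by
      rw [hPhi_def]
      simp only []
      linarith [d1, d2]
    rw [hsplit, hL_def, add_mul]
    linarith
  have hFdiff : ∀ w ∈ Set.Icc eps (1 - eps), ∀ w' ∈ Set.Icc eps (1 - eps),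
      F w ≤ F w' + L * |w - w'| := by
    intro w hw w' hw'
    have hFw : F w = sSup (Phi w '' Sph) := by rw [hF_def]
    rw [hFw]
    apply csSup_le (hSphNe.image _)
    rintro x ⟨y, hy, rfl⟩
    exact le_trans (hPhiLip w hw w' hw' y hy) (add_le_add_left (hFle w' y hy) _)
  have hFcont : ContinuousOn F (Set.Icc eps (1 - eps)) := by
    apply LipschitzOnWith.continuousOn (K := Real.toNNReal L)
    apply LipschitzOnWith.of_dist_le_mul
    intro x hx y hy
    rw [Real.dist_eq, Real.dist_eq, Real.coe_toNNReal L hL0, abs_sub_le_iff]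
    have e1 := hFdiff x hx y hy
    have e2 := hFdiff y hy x hx
    rw [abs_sub_comm y x] at e2
    constructor <;> linarith
  -- the minimizer
  have hIccNe : (Set.Icc eps (1 - eps)).Nonempty := ⟨1/2, by constructor <;> linarith⟩
  obtain ⟨w0, hw0mem, hw0min'⟩ := isCompact_Icc.exists_isMinOn hIccNe hFcont
  have hw0min : ∀ w ∈ Set.Icc eps (1 - eps), F w0 ≤ F w := fun w hw => hw0min' hw
  have hFhalf : F w0 ≤ C := hw0min (1/2) ⟨by linarith, by linarith⟩
  have hw0lo : eps < w0 := by
    rcases lt_or_eq_of_le hw0mem.1 with h | h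
    · exact h
    · exfalso; rw [← h] at hFhalf; linarith [hFeps_low]
  have hw0hi : w0 < 1 - eps := by
    rcases lt_or_eq_of_le hw0mem.2 with h | h
    · exact h
    · exfalso; rw [h] at hFhalf; linarith [hFeps_high]
  have hw00 : 0 < w0 := lt_trans heps_pos hw0lo
  have hw01 : w0 < 1 := by linarith
  -- two-sided perturbation sequences
  set d0 := min (w0 - eps) (1 - eps - w0) with hd0_def
  have hd0pos : 0 < d0 := lt_min (by linarith) (by linarith)
  have hdkpos : ∀ k : ℕ, 0 < d0 / ((k:ℝ)+1) := fun k => div_pos hd0pos (by positivity)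
  have hdkle : ∀ k : ℕ, d0 / ((k:ℝ)+1) ≤ d0 := by
    intro k
    apply div_le_self hd0pos.le
    have : (0:ℝ) ≤ (k:ℝ) := Nat.cast_nonneg k
    linarith
  have hPhi_eq : ∀ (w : ℝ) (y : Fin n → ℝ), Phi w y = aq y / w + bq y / (1 - w) :=
    fun w y => by rw [hPhi_def]
  have hnat_tend : ∀ (ph : ℕ → ℕ), StrictMono ph →
      Filter.Tendsto (fun k => d0/((ph k:ℝ)+1)) Filter.atTop (nhds 0) := by
    intro ph hmono
    apply Filter.Tendsto.div_atTop tendsto_const_nhds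
    have h1 : Filter.Tendsto (fun k => ((ph k : ℕ) : ℝ)) Filter.atTop Filter.atTop :=
      tendsto_natCast_atTop_atTop.comp hmono.tendsto_atTop
    exact Filter.tendsto_atTop_add_const_right _ 1 h1
  -- right side
  have hwkmem : ∀ k : ℕ, w0 + d0/((k:ℝ)+1) ∈ Set.Icc eps (1-eps) := by
    intro k
    constructor
    · linarith [hdkpos k]
    · have := hdkle k
      have h2 : d0 ≤ 1 - eps - w0 := min_le_right _ _
      linarith
  have hwkgt : ∀ k : ℕ, w0 < w0 + d0/((k:ℝ)+1) := fun k => by linarith [hdkpos k]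
  choose yr hyrS hyrF using fun k : ℕ => hFmax (w0 + d0/((k:ℝ)+1))
  have hkey_r : ∀ k : ℕ, aq (yr k) * ((1 - (w0 + d0/((k:ℝ)+1))) * (1 - w0)) ≤
      bq (yr k) * ((w0 + d0/((k:ℝ)+1)) * w0) := by
    intro k
    apply alg_right hw00 (hwkgt k)
      (by have := (hwkmem k).2; linarith : w0 + d0/((k:ℝ)+1) < 1)
    rw [← hPhi_eq, ← hPhi_eq]
    have h1 : Phi w0 (yr k) ≤ F w0 := hFle w0 (yr k) (hyrS k)
    have h2 : F w0 ≤ F (w0 + d0/((k:ℝ)+1)) := hw0min _ (hwkmem k)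
    linarith [hyrF k]
  have hPhi_r : ∀ k : ℕ, F w0 - L * (d0/((k:ℝ)+1)) ≤ Phi w0 (yr k) := by
    intro k
    have h1 := hPhiLip (w0 + d0/((k:ℝ)+1)) (hwkmem k) w0 hw0mem (yr k) (hyrS k)
    have habs : |w0 + d0/((k:ℝ)+1) - w0| = d0/((k:ℝ)+1) := by
      rw [show w0 + d0/((k:ℝ)+1) - w0 = d0/((k:ℝ)+1) by ring, abs_of_pos (hdkpos k)]
    rw [habs, ← hyrF k] at h1
    have h2 : F w0 ≤ F (w0 + d0/((k:ℝ)+1)) := hw0min _ (hwkmem k)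
    linarith
  obtain ⟨yp, hypS, phr, hphr_mono, hphr_tend⟩ := hSphC.tendsto_subseq hyrS
  have hdkr : Filter.Tendsto (fun k => d0/((phr k:ℝ)+1)) Filter.atTop (nhds 0) :=
    hnat_tend phr hphr_mono
  have hwk_tend : Filter.Tendsto (fun k => w0 + d0/((phr k:ℝ)+1)) Filter.atTop (nhds w0) := by
    simpa using tendsto_const_nhds.add hdkr
  have haqr : Filter.Tendsto (fun k => aq (yr (phr k))) Filter.atTop (nhds (aq yp)) :=
    (haq_cont.tendsto yp).comp hphr_tend
  have hbqr : Filter.Tendsto (fun k => bq (yr (phr k))) Filter.atTop (nhds (bq yp)) :=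
    (hbq_cont.tendsto yp).comp hphr_tend
  have hDqp : aq yp * ((1 - w0) * (1 - w0)) ≤ bq yp * (w0 * w0) := by
    have hlhs : Filter.Tendsto
        (fun k => aq (yr (phr k)) * ((1 - (w0 + d0/((phr k:ℝ)+1))) * (1 - w0)))
        Filter.atTop (nhds (aq yp * ((1 - w0) * (1 - w0)))) :=
      haqr.mul ((tendsto_const_nhds.sub hwk_tend).mul tendsto_const_nhds)
    have hrhs : Filter.Tendsto
        (fun k => bq (yr (phr k)) * ((w0 + d0/((phr k:ℝ)+1)) * w0))
        Filter.atTop (nhds (bq yp * (w0 * w0))) :=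
      hbqr.mul (hwk_tend.mul tendsto_const_nhds)
    exact le_of_tendsto_of_tendsto' hlhs hrhs (fun k => hkey_r (phr k))
  have hPhip_eq : Phi w0 yp = F w0 := by
    apply le_antisymm (hFle w0 yp hypS)
    have hlhs : Filter.Tendsto (fun k => F w0 - L * (d0/((phr k:ℝ)+1)))
        Filter.atTop (nhds (F w0)) := by
      have ht : Filter.Tendsto (fun k : ℕ => F w0 - L * (d0/((phr k:ℝ)+1)))
          Filter.atTop (nhds (F w0 - L * 0)) :=
        tendsto_const_nhds.sub (tendsto_const_nhds.mul hdkr)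
      simpa using ht
    have hrhs : Filter.Tendsto (fun k => Phi w0 (yr (phr k))) Filter.atTop
        (nhds (Phi w0 yp)) := ((hPhicont w0).tendsto yp).comp hphr_tend
    exact le_of_tendsto_of_tendsto' hlhs hrhs (fun k => hPhi_r (phr k))
  -- left side
  have hwkmem' : ∀ k : ℕ, w0 - d0/((k:ℝ)+1) ∈ Set.Icc eps (1-eps) := by
    intro k
    constructor
    · have := hdkle k
      have h2 : d0 ≤ w0 - eps := min_le_left _ _
      linarith
    · linarith [hdkpos k]
  have hwklt : ∀ k : ℕ, w0 - d0/((k:ℝ)+1) < w0 := fun k => by linarith [hdkpos k]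
  choose ys hysS hysF using fun k : ℕ => hFmax (w0 - d0/((k:ℝ)+1))
  have hkey_l : ∀ k : ℕ, bq (ys k) * ((w0 - d0/((k:ℝ)+1)) * w0) ≤
      aq (ys k) * ((1 - (w0 - d0/((k:ℝ)+1))) * (1 - w0)) := by
    intro k
    apply alg_left (by have := (hwkmem' k).1; linarith : 0 < w0 - d0/((k:ℝ)+1))
      (hwklt k) hw01
    rw [← hPhi_eq, ← hPhi_eq]
    have h1 : Phi w0 (ys k) ≤ F w0 := hFle w0 (ys k) (hysS k)
    have h2 : F w0 ≤ F (w0 - d0/((k:ℝ)+1)) := hw0min _ (hwkmem' k)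
    linarith [hysF k]
  have hPhi_l : ∀ k : ℕ, F w0 - L * (d0/((k:ℝ)+1)) ≤ Phi w0 (ys k) := by
    intro k
    have h1 := hPhiLip (w0 - d0/((k:ℝ)+1)) (hwkmem' k) w0 hw0mem (ys k) (hysS k)
    have habs : |w0 - d0/((k:ℝ)+1) - w0| = d0/((k:ℝ)+1) := by
      rw [show w0 - d0/((k:ℝ)+1) - w0 = -(d0/((k:ℝ)+1)) by ring, abs_neg,
        abs_of_pos (hdkpos k)]
    rw [habs, ← hysF k] at h1
    have h2 : F w0 ≤ F (w0 - d0/((k:ℝ)+1)) := hw0min _ (hwkmem' k)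
    linarith
  obtain ⟨ym, hymS, phl, hphl_mono, hphl_tend⟩ := hSphC.tendsto_subseq hysS
  have hdkl : Filter.Tendsto (fun k => d0/((phl k:ℝ)+1)) Filter.atTop (nhds 0) :=
    hnat_tend phl hphl_mono
  have hwk_tend' : Filter.Tendsto (fun k => w0 - d0/((phl k:ℝ)+1)) Filter.atTop (nhds w0) := by
    simpa using tendsto_const_nhds.sub hdkl
  have haql : Filter.Tendsto (fun k => aq (ys (phl k))) Filter.atTop (nhds (aq ym)) :=
    (haq_cont.tendsto ym).comp hphl_tend
  have hbql : Filter.Tendsto (fun k => bq (ys (phl k))) Filter.atTop (nhds (bq ym)) :=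
    (hbq_cont.tendsto ym).comp hphl_tend
  have hDqm : bq ym * (w0 * w0) ≤ aq ym * ((1 - w0) * (1 - w0)) := by
    have hlhs : Filter.Tendsto
        (fun k => bq (ys (phl k)) * ((w0 - d0/((phl k:ℝ)+1)) * w0))
        Filter.atTop (nhds (bq ym * (w0 * w0))) :=
      hbql.mul (hwk_tend'.mul tendsto_const_nhds)
    have hrhs : Filter.Tendsto
        (fun k => aq (ys (phl k)) * ((1 - (w0 - d0/((phl k:ℝ)+1))) * (1 - w0)))
        Filter.atTop (nhds (aq ym * ((1 - w0) * (1 - w0)))) :=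
      haql.mul ((tendsto_const_nhds.sub hwk_tend').mul tendsto_const_nhds)
    exact le_of_tendsto_of_tendsto' hlhs hrhs (fun k => hkey_l (phl k))
  have hPhim_eq : Phi w0 ym = F w0 := by
    apply le_antisymm (hFle w0 ym hymS)
    have hlhs : Filter.Tendsto (fun k => F w0 - L * (d0/((phl k:ℝ)+1)))
        Filter.atTop (nhds (F w0)) := by
      have ht : Filter.Tendsto (fun k : ℕ => F w0 - L * (d0/((phl k:ℝ)+1)))
          Filter.atTop (nhds (F w0 - L * 0)) :=
        tendsto_const_nhds.sub (tendsto_const_nhds.mul hdkl)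
      simpa using ht
    have hrhs : Filter.Tendsto (fun k => Phi w0 (ys (phl k))) Filter.atTop
        (nhds (Phi w0 ym)) := ((hPhicont w0).tendsto ym).comp hphl_tend
    exact le_of_tendsto_of_tendsto' hlhs hrhs (fun k => hPhi_l (phl k))
  -- the top eigenspace machinery
  set Q : Matrix (Fin n) (Fin n) ℝ :=
    (1/w0) • S + (1/(1-w0)) • vecMulVec v v with hQ_def
  have hw0ne : w0 ≠ 0 := ne_of_gt hw00
  have hw1pos : (0:ℝ) < 1 - w0 := by linarith
  have hw1ne : (1:ℝ) - w0 ≠ 0 := ne_of_gt hw1pos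
  have hQsym : Qᵀ = Q := by
    rw [hQ_def, transpose_add, transpose_smul, transpose_smul, hSsym]
    congr 2
    ext i j
    simp [vecMulVec_apply, mul_comm]
  have hPhiQ : ∀ y : Fin n → ℝ, y ⬝ᵥ (Q *ᵥ y) = Phi w0 y := by
    intro y
    rw [hPhi_eq, hQ_def, add_mulVec, smul_mulVec, smul_mulVec,
      dotProduct_add, dotProduct_smul, dotProduct_smul, vecMulVec_mulVec_eq,
      dotProduct_smul]
    simp only [haq_def, hbq_def, smul_eq_mul]
    rw [dotProduct_comm y v]
    ring
  have hQquad : ∀ x : Fin n → ℝ, x ⬝ᵥ (Q *ᵥ x) ≤ F w0 * (x ⬝ᵥ x) := by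
    intro x
    rcases eq_or_ne x 0 with rfl | hx
    · simp
    · have h0 : 0 < x ⬝ᵥ x := hdotpos x hx
      have hr2 : Real.sqrt (x ⬝ᵥ x) ^ 2 = x ⬝ᵥ x := Real.sq_sqrt h0.le
      have hmem := hnorm_mem x hx
      have hle := hFle w0 _ hmem
      rw [hPhiQ]
      rw [hPhi_eq] at hle ⊢
      rw [haq_smul, hbq_smul] at hle
      have hinv : ((Real.sqrt (x ⬝ᵥ x))⁻¹)^2 = (x ⬝ᵥ x)⁻¹ := by
        rw [inv_pow, hr2]
      rw [hinv] at hle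
      have h2 := mul_le_mul_of_nonneg_left hle h0.le
      calc aq x / w0 + bq x / (1 - w0)
          = (x ⬝ᵥ x) * ((x ⬝ᵥ x)⁻¹ * aq x / w0 + (x ⬝ᵥ x)⁻¹ * bq x / (1 - w0)) := by
            field_simp
      _ ≤ (x ⬝ᵥ x) * F w0 := h2
      _ = F w0 * (x ⬝ᵥ x) := mul_comm _ _
  have hlampsd : ((F w0) • (1 : Matrix (Fin n) (Fin n) ℝ) - Q).PosSemidef := by
    apply mk_psd
    · rw [transpose_sub, transpose_smul, transpose_one, hQsym]
    · intro x
      rw [sub_mulVec, dotProduct_sub, smul_mulVec, one_mulVec, dotProduct_smul,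
        smul_eq_mul]
      linarith [hQquad x]
  have heig : ∀ y : Fin n → ℝ, y ∈ Sph → Phi w0 y = F w0 → Q *ᵥ y = (F w0) • y := by
    intro y hyS hyP
    have hy1 : y ⬝ᵥ y = 1 := hyS
    have h0 : y ⬝ᵥ (((F w0) • (1 : Matrix (Fin n) (Fin n) ℝ) - Q) *ᵥ y) = 0 := by
      rw [sub_mulVec, dotProduct_sub, smul_mulVec, one_mulVec, dotProduct_smul,
        smul_eq_mul, hy1, hPhiQ, hyP, mul_one, sub_self]
    have hker := psd_kernel hlampsd h0
    rw [sub_mulVec, sub_eq_zero, smul_mulVec, one_mulVec] at hker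
    exact hker.symm
  -- find a maximizer which is "balanced"
  set Dq : (Fin n → ℝ) → ℝ :=
    fun y => bq y * (w0*w0) - aq y * ((1-w0)*(1-w0)) with hDq_def
  obtain ⟨z, hzSph, hzP, hzD⟩ : ∃ z, z ∈ Sph ∧ Phi w0 z = F w0 ∧ Dq z = 0 := by
    have hDqp' : 0 ≤ Dq yp := by
      show 0 ≤ bq yp * (w0*w0) - aq yp * ((1-w0)*(1-w0))
      linarith [hDqp]
    have hDqm' : Dq ym ≤ 0 := by
      show bq ym * (w0*w0) - aq ym * ((1-w0)*(1-w0)) ≤ 0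
      linarith [hDqm]
    rcases eq_or_lt_of_le hDqp' with heq | hpos
    · exact ⟨yp, hypS, hPhip_eq, heq.symm⟩
    rcases eq_or_lt_of_le hDqm' with heq | hneg
    · exact ⟨ym, hymS, hPhim_eq, heq⟩
    have hQp := heig yp hypS hPhip_eq
    have hQm := heig ym hymS hPhim_eq
    have hDeven : ∀ y : Fin n → ℝ, Dq (-y) = Dq y := by
      intro y
      show bq (-y) * (w0*w0) - aq (-y) * ((1-w0)*(1-w0))
        = bq y * (w0*w0) - aq y * ((1-w0)*(1-w0))
      rw [← neg_one_smul ℝ y, haq_smul, hbq_smul]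
      norm_num
    set g : ℝ → (Fin n → ℝ) := fun t => (1-t) • ym + t • yp with hg_def
    have hg0 : g 0 = ym := by
      show (1-(0:ℝ)) • ym + (0:ℝ) • yp = ym
      simp
    have hg1 : g 1 = yp := by
      show (1-(1:ℝ)) • ym + (1:ℝ) • yp = yp
      simp
    have hgcont : Continuous g := by
      rw [hg_def]
      exact ((continuous_const.sub continuous_id).smul continuous_const).add
        (continuous_id.smul continuous_const)
    have hDqcont : Continuous Dq := by
      rw [hDq_def]
      exact (hbq_cont.mul continuous_const).sub (haq_cont.mul continuous_const)
    have hDcont : Continuous fun t => Dq (g t) := hDqcont.comp hgcont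
    have hIVT := intermediate_value_Icc (by norm_num : (0:ℝ) ≤ 1) hDcont.continuousOn
    have h0mem : (0:ℝ) ∈ Set.Icc (Dq (g 0)) (Dq (g 1)) := by
      rw [hg0, hg1]
      exact ⟨hneg.le, hpos.le⟩
    obtain ⟨t0, ht0, hDg0⟩ := hIVT h0mem
    have hgt0ne : g t0 ≠ 0 := by
      intro hzero
      have hz' : (1-t0) • ym + t0 • yp = 0 := hzero
      have h1 : (1-t0) • ym = -(t0 • yp) := eq_neg_of_add_eq_zero_left hz'
      have h2 : ((1-t0) • ym) ⬝ᵥ ((1-t0) • ym) = (t0 • yp) ⬝ᵥ (t0 • yp) := by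
        rw [h1]
        simp [neg_dotProduct, dotProduct_neg]
      rw [smul_dotProduct, dotProduct_smul, smul_dotProduct, dotProduct_smul] at h2
      have hym1 : ym ⬝ᵥ ym = 1 := hymS
      have hyp1 : yp ⬝ᵥ yp = 1 := hypS
      rw [hym1, hyp1] at h2
      simp only [smul_eq_mul, mul_one] at h2
      have ht05 : t0 = 1/2 := by linear_combination (-1/2 : ℝ) * h2
      have hymyp : ym = -yp := by
        ext i
        have hfun := congrFun h1 i
        rw [ht05] at hfun
        simp only [Pi.smul_apply, Pi.neg_apply, smul_eq_mul] at hfun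
        norm_num at hfun
        show ym i = -(yp i)
        linarith
      rw [hymyp, hDeven] at hneg
      linarith
    have hr0 : 0 < (g t0) ⬝ᵥ (g t0) := hdotpos _ hgt0ne
    have hrpos : 0 < Real.sqrt ((g t0) ⬝ᵥ (g t0)) := Real.sqrt_pos.mpr hr0
    refine ⟨(Real.sqrt ((g t0) ⬝ᵥ (g t0)))⁻¹ • g t0, hnorm_mem _ hgt0ne, ?_, ?_⟩
    · have hQg : Q *ᵥ (g t0) = (F w0) • (g t0) := by
        show Q *ᵥ ((1-t0) • ym + t0 • yp) = (F w0) • ((1-t0) • ym + t0 • yp)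
        rw [mulVec_add, mulVec_smul, mulVec_smul, hQp, hQm]
        module
      have hQz : Q *ᵥ ((Real.sqrt ((g t0) ⬝ᵥ (g t0)))⁻¹ • g t0)
          = (F w0) • ((Real.sqrt ((g t0) ⬝ᵥ (g t0)))⁻¹ • g t0) := by
        rw [mulVec_smul, hQg, smul_comm]
      have hz1 : ((Real.sqrt ((g t0) ⬝ᵥ (g t0)))⁻¹ • g t0) ⬝ᵥ
          ((Real.sqrt ((g t0) ⬝ᵥ (g t0)))⁻¹ • g t0) = 1 := hnorm_mem _ hgt0ne
      rw [← hPhiQ, hQz, dotProduct_smul, hz1, smul_eq_mul, mul_one]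
    · show bq _ * (w0*w0) - aq _ * ((1-w0)*(1-w0)) = 0
      rw [haq_smul, hbq_smul]
      have hD' : Dq (g t0) = 0 := hDg0
      have hD'' : bq (g t0) * (w0*w0) - aq (g t0) * ((1-w0)*(1-w0)) = 0 := hD'
      linear_combination ((Real.sqrt ((g t0) ⬝ᵥ (g t0)))⁻¹)^2 * hD''
  -- the value bound
  have hz0 : z ≠ 0 := by
    intro h
    rw [h] at hzSph
    have h1 : (0 : Fin n → ℝ) ⬝ᵥ (0 : Fin n → ℝ) = 1 := hzSph
    rw [zero_dotProduct] at h1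
    norm_num at h1
  have hzaq : 0 < aq z := haq_pos z hz0
  set sa := Real.sqrt (aq z) with hsa_def
  set sb := |v ⬝ᵥ z| with hsb_def
  have hsa2 : sa^2 = aq z := Real.sq_sqrt hzaq.le
  have hsb2 : sb^2 = bq z := by
    rw [hsb_def, sq_abs, hbq_def]
  have hsa_pos : 0 < sa := Real.sqrt_pos.mpr hzaq
  have hsb_nonneg : 0 ≤ sb := abs_nonneg _
  have hz1 : z ⬝ᵥ z = 1 := hzSph
  have hsum : sa + sb ≤ 1 := by
    have h := hstar' z
    rw [hz1, Real.sqrt_one] at h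
    exact h
  have hrel : sb * w0 = sa * (1 - w0) := by
    have hD : bq z * (w0*w0) - aq z * ((1-w0)*(1-w0)) = 0 := hzD
    have h2 : (sb*w0)^2 = (sa*(1-w0))^2 := by
      rw [mul_pow, mul_pow, hsa2, hsb2]
      linear_combination hD
    have hb1 : 0 ≤ sb * w0 := by positivity
    have hb2 : 0 ≤ sa * (1 - w0) := by positivity
    rw [← Real.sqrt_sq hb1, ← Real.sqrt_sq hb2, h2]
  have hFw0_eq : F w0 = (sa + sb)^2 := by
    have h1 : w0 * (sa + sb) = sa := by linear_combination hrel
    have h2 : (1 - w0) * (sa + sb) = sb := by linear_combination -hrel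
    have h3 : F w0 = sa^2 / w0 + sb^2 / (1 - w0) := by
      rw [← hzP, hPhi_eq, hsa2, hsb2]
    have h4 : sa^2 = (sa * (sa + sb)) * w0 := by linear_combination (-sa) * h1
    have h5 : sb^2 = (sb * (sa + sb)) * (1 - w0) := by linear_combination (-sb) * h2
    rw [h3, h4, h5, mul_div_cancel_right₀ _ hw0ne, mul_div_cancel_right₀ _ hw1ne]
    ring
  have hlam1 : F w0 ≤ 1 := by
    rw [hFw0_eq]
    have h0 : 0 ≤ sa + sb := add_nonneg hsa_pos.le hsb_nonneg
    calc (sa + sb)^2 ≤ 1^2 := by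
          apply pow_le_pow_left₀ h0 hsum
    _ = 1 := one_pow 2
  -- assemble the conclusion
  refine ⟨w0, Or.inr ⟨hw00, hw01, ?_⟩⟩
  have hQfact : U - ((1/w0) • A + (1/(1-w0)) • vecMulVec u u)
      = W * ((1 : Matrix (Fin n) (Fin n) ℝ) - Q) * W := by
    rw [hQ_def, Matrix.mul_sub, Matrix.sub_mul, Matrix.mul_one, hWW]
    congr 1
    rw [Matrix.mul_add, Matrix.add_mul, mul_smul_comm, mul_smul_comm, smul_mul_assoc,
      smul_mul_assoc]
    congr 1
    · congr 1
      rw [hS_def]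
      simp only [Matrix.mul_assoc]
      rw [hWiW, Matrix.mul_one, ← Matrix.mul_assoc, hWWi, Matrix.one_mul]
    · congr 1
      rw [mul_vecMulVec_mul, hWherm, hWv]
  rw [hQfact]
  have hPpsd : ((1 : Matrix (Fin n) (Fin n) ℝ) - Q).PosSemidef := by
    apply mk_psd
    · rw [transpose_sub, transpose_one, hQsym]
    · intro x
      rw [sub_mulVec, dotProduct_sub, one_mulVec]
      have h1 := hQquad x
      have h2 := hdotnn x
      have h3 : F w0 * (x ⬝ᵥ x) ≤ x ⬝ᵥ x := mul_le_of_le_one_left h2 hlam1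
      linarith only [h1, h3]
  have hfinal := hPpsd.mul_mul_conjTranspose_same W
  rwa [Matrix.conjTranspose_eq_transpose_of_trivial, hWherm] at hfinal
end

section
/- Let A, U be symmetric positive definite n×n matrices, u ∈ ℝⁿ, and ω ∈ (0,1) with 1 − ω − uᵀU⁻¹u > 0. Then U ⪰ (1/ω)A + (1/(1−ω))uuᵀ if and only if ωA⁻¹ ⪰ U⁻¹ + (U⁻¹u)(U⁻¹u)ᵀ/(1 − ω − uᵀU⁻¹u). -/
/-!
Write `M = U - (1/(1-ω)) u uᵀ` and `P = (1/ω) A`, so that the first inequality reads `P ⪯ M`.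
By Sherman–Morrison, `M⁻¹ = U⁻¹ + vvᵀ/(1 - ω - uᵀv)` with `v = U⁻¹u`, which is positive definite
under the nondegeneracy condition, and `P⁻¹ = ωA⁻¹`. Inversion reverses the Loewner order on
positive definite matrices, so `P ⪯ M ↔ M⁻¹ ⪯ P⁻¹`, which is the second inequality.
-/

open Matrix

namespace Matrix

variable {n : Type*} [Fintype n] [DecidableEq n]

theorem inv_sub_smul_vecMulVec {K : Type*} [Field K] {U : Matrix n n K} (hU : IsUnit U.det)
    (c : K) (u w : n → K) (h : 1 - c * (w ⬝ᵥ (U⁻¹ *ᵥ u)) ≠ 0) :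
    (U - c • vecMulVec u w)⁻¹ =
      U⁻¹ + (c / (1 - c * (w ⬝ᵥ (U⁻¹ *ᵥ u)))) • vecMulVec (U⁻¹ *ᵥ u) (w ᵥ* U⁻¹) := by
  set s := 1 - c * (w ⬝ᵥ (U⁻¹ *ᵥ u))
  have hv : (U - c • vecMulVec u w) *ᵥ (U⁻¹ *ᵥ u) = s • u := by
    rw [sub_mulVec, smul_mulVec, vecMulVec_mulVec, mulVec_mulVec, mul_nonsing_inv _ hU,
      one_mulVec, op_smul_eq_smul, smul_smul, sub_smul, one_smul]
  refine inv_eq_right_inv ?_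
  rw [Matrix.mul_add, Matrix.mul_smul, mul_vecMulVec, hv, smul_vecMulVec, smul_smul,
    div_mul_cancel₀ c h, Matrix.sub_mul, mul_nonsing_inv _ hU, Matrix.smul_mul, vecMulVec_mul,
    sub_add_cancel]

variable {K : Type*} [Field K] [PartialOrder K] [StarRing K] [StarOrderedRing K]

/-- Both sides say that the block matrix `[[B, 1], [1, A⁻¹]]` is positive semidefinite: they are
its two Schur complements. -/
theorem PosDef.posSemidef_sub_iff_posSemidef_inv_sub_inv {A B : Matrix n n K} (hA : A.PosDef)
    (hB : B.PosDef) : (B - A).PosSemidef ↔ (A⁻¹ - B⁻¹).PosSemidef := by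
  let := hA.isUnit.invertible
  let := hB.isUnit.invertible
  let := hA.inv.isUnit.invertible
  have hSchur₁₁ := hB.fromBlocks₁₁ 1 A⁻¹
  have hSchur₂₂ := PosDef.fromBlocks₂₂ B 1 hA.inv
  rw [conjTranspose_one, Matrix.one_mul, Matrix.mul_one] at hSchur₁₁ hSchur₂₂
  rw [← hSchur₁₁, hSchur₂₂, inv_inv_of_invertible]

end Matrix

theorem stmt11 {n : ℕ} (A U : Matrix (Fin n) (Fin n) ℝ)
    (hA : A.PosDef) (hU : U.PosDef) (u : Fin n → ℝ)
    (ω : ℝ) (h0 : 0 < ω) (h1 : ω < 1)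
    (hnd : 0 < 1 - ω - u ⬝ᵥ (U⁻¹ *ᵥ u)) :
    (U - ((1 / ω) • A + (1 / (1 - ω)) • Matrix.vecMulVec u u)).PosSemidef ↔
      (ω • A⁻¹ - (U⁻¹ + (1 / (1 - ω - u ⬝ᵥ (U⁻¹ *ᵥ u))) •
        Matrix.vecMulVec (U⁻¹ *ᵥ u) (U⁻¹ *ᵥ u))).PosSemidef := by
  set v := U⁻¹ *ᵥ u
  have hω : 1 - ω ≠ 0 := (sub_pos.2 h1).ne'
  have hSM : (U - (1 / (1 - ω)) • vecMulVec u u)⁻¹ =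
      U⁻¹ + (1 / (1 - ω - u ⬝ᵥ v)) • vecMulVec v v := by
    have hvec : u ᵥ* U⁻¹ = v := by
      rw [← mulVec_transpose, ← conjTranspose_eq_transpose_of_trivial, hU.inv.isHermitian.eq]
    have hden : 1 - 1 / (1 - ω) * (u ⬝ᵥ v) = (1 - ω - u ⬝ᵥ v) / (1 - ω) := by
      field_simp
    rw [inv_sub_smul_vecMulVec ((isUnit_iff_isUnit_det U).1 hU.isUnit) _ _ _
      (hden ▸ div_ne_zero hnd.ne' hω), hvec, hden, div_div_div_cancel_right₀ hω]
  have hMpd : (U - (1 / (1 - ω)) • vecMulVec u u).PosDef := by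
    rw [← posDef_inv_iff, hSM]
    exact hU.inv.add_posSemidef ((posSemidef_vecMulVec_self_star v).smul (by positivity))
  have hPinv : ((1 / ω) • A)⁻¹ = ω • A⁻¹ := by
    refine inv_eq_right_inv ?_
    rw [smul_mul_smul_comm, mul_nonsing_inv _ ((isUnit_iff_isUnit_det A).1 hA.isUnit),
      one_div_mul_cancel h0.ne', one_smul]
  rw [show U - ((1 / ω) • A + (1 / (1 - ω)) • vecMulVec u u) =
      U - (1 / (1 - ω)) • vecMulVec u u - (1 / ω) • A by abel,
    (hA.smul (by positivity)).posSemidef_sub_iff_posSemidef_inv_sub_inv hMpd, hPinv, hSM]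
end

section
/- Let A, U be symmetric positive definite n×n matrices, u ∈ ℝⁿ, and ω ∈ (0,1) with 1 − ω − uᵀU⁻¹u > 0. Then U ⪰ (1/ω)A + (1/(1−ω))uuᵀ if and only if the (n+1)×(n+1) matrix [[U⁻¹, −U⁻¹u],[(−U⁻¹u)ᵀ, uᵀU⁻¹u − 1]] − ω·[[A⁻¹, 0],[0ᵀ, −1]] is negative semidefinite. -/
/-!
Write `V = U - (1 - ω)⁻¹ u uᵀ`, `w = U⁻¹ u` and `d = 1 - ω - uᵀ U⁻¹ u > 0`. The covariance-union
inequality says `V - ω⁻¹ A ⪰ 0`. Inversion reverses the Loewner order on positive definite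
matrices, so this is `ω A⁻¹ - V⁻¹ ⪰ 0`, and by Sherman–Morrison `V⁻¹ = U⁻¹ + d⁻¹ w wᵀ`.
The negated S-procedure matrix is `[[ω A⁻¹ - U⁻¹, w], [wᵀ, d]]`, and its Schur complement with
respect to the positive corner `d` is the same matrix `ω A⁻¹ - U⁻¹ - d⁻¹ w wᵀ`.
-/

open Matrix
open scoped ComplexOrder

namespace Matrix

theorem inv_sub_vecMulVec {m K : Type*} [Fintype m] [DecidableEq m] [Field K]
    {U : Matrix m m K} (hU : IsUnit U) (a b : m → K) (h : 1 - b ⬝ᵥ (U⁻¹ *ᵥ a) ≠ 0) :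
    (U - vecMulVec a b)⁻¹ =
      U⁻¹ + (1 - b ⬝ᵥ (U⁻¹ *ᵥ a))⁻¹ • vecMulVec (U⁻¹ *ᵥ a) (b ᵥ* U⁻¹) := by
  refine inv_eq_right_inv ?_
  set t := 1 - b ⬝ᵥ (U⁻¹ *ᵥ a)
  have hba : b ⬝ᵥ (U⁻¹ *ᵥ a) = 1 - t := by ring
  rw [sub_mul, mul_add, mul_add, Matrix.mul_smul, Matrix.mul_smul, mul_vecMulVec, vecMulVec_mul,
    vecMulVec_mul_vecMulVec, mulVec_mulVec, mul_nonsing_inv U ((isUnit_iff_isUnit_det U).mp hU),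
    one_mulVec, hba, vecMulVec_smul, smul_smul, mul_one_sub, inv_mul_cancel₀ h]
  module

theorem inv_sub_smul_vecMulVec_self {m K : Type*} [Fintype m] [DecidableEq m] [Field K]
    {U : Matrix m m K} (hU : IsUnit U) (hUs : U.IsSymm) (c : K) (u : m → K)
    (h : 1 - c * (u ⬝ᵥ (U⁻¹ *ᵥ u)) ≠ 0) :
    (U - c • vecMulVec u u)⁻¹ =
      U⁻¹ + (c / (1 - c * (u ⬝ᵥ (U⁻¹ *ᵥ u)))) • vecMulVec (U⁻¹ *ᵥ u) (U⁻¹ *ᵥ u) := by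
  rw [← vecMulVec_smul, inv_sub_vecMulVec hU, smul_dotProduct, smul_eq_mul, smul_vecMul,
    ← mulVec_transpose, hUs.inv.eq, vecMulVec_smul, smul_smul, div_eq_inv_mul]
  rwa [smul_dotProduct, smul_eq_mul]

theorem PosDef.posSemidef_sub_iff_posSemidef_inv_sub {m 𝕜 : Type*} [Fintype m] [DecidableEq m]
    [RCLike 𝕜] {X Y : Matrix m m 𝕜} (hX : X.PosDef) (hY : Y.PosDef) :
    (X - Y).PosSemidef ↔ (Y⁻¹ - X⁻¹).PosSemidef := by
  -- both sides are Schur complements of the block matrix `[[X, 1], [1, Y⁻¹]]`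
  have := hX.isUnit.invertible
  have := hY.isUnit.invertible
  have := hY.inv.isUnit.invertible
  have h₁₁ := PosDef.fromBlocks₁₁ 1 Y⁻¹ hX
  have h₂₂ := PosDef.fromBlocks₂₂ X 1 hY.inv
  simp only [conjTranspose_one, one_mul, mul_one, inv_inv_of_invertible] at h₁₁ h₂₂
  rw [← h₂₂, h₁₁]

theorem posSemidef_fromBlocks_replicateCol_iff {m : Type*} [Fintype m] (B : Matrix m m ℝ)
    (v : m → ℝ) {d : ℝ} (hd : 0 < d) :
    (fromBlocks B (replicateCol (Fin 1) v) (replicateRow (Fin 1) v) !![d]).PosSemidef ↔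
      (B - d⁻¹ • vecMulVec v v).PosSemidef := by
  have hD : (!![d] : Matrix (Fin 1) (Fin 1) ℝ).PosDef := by
    convert (PosDef.one : (1 : Matrix (Fin 1) (Fin 1) ℝ).PosDef).smul hd using 1
    ext i j; fin_cases i; fin_cases j; simp
  have := hD.isUnit.invertible
  have hrow : replicateRow (Fin 1) v = (replicateCol (Fin 1) v)ᴴ := by simp
  rw [hrow, PosDef.fromBlocks₂₂ _ _ hD]
  congr! 2
  ext i j
  simp [inv_subsingleton, mul_apply, vecMulVec_apply]
  ring

theorem neg_fromBlocks_sub_smul_fromBlocks {m : Type*} (P Q : Matrix m m ℝ) (w : m → ℝ)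
    (s ω : ℝ) :
    -(fromBlocks P (replicateCol (Fin 1) (-w)) (replicateRow (Fin 1) (-w)) !![s - 1]
        - ω • fromBlocks Q 0 0 !![(-1 : ℝ)]) =
      fromBlocks (ω • Q - P) (replicateCol (Fin 1) w) (replicateRow (Fin 1) w) !![1 - ω - s] := by
  ext (i | i) (j | j) <;> simp; ring

end Matrix

theorem stmt13_general {n : ℕ} (A U : Matrix (Fin n) (Fin n) ℝ)
    (hA : A.PosDef) (hU : U.PosDef) (u : Fin n → ℝ)
    (ω : ℝ) (h0 : 0 < ω)
    (hnd : 0 < 1 - ω - u ⬝ᵥ (U⁻¹ *ᵥ u)) :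
    (U - ((1 / ω) • A + (1 / (1 - ω)) • Matrix.vecMulVec u u)).PosSemidef ↔
      (-(Matrix.fromBlocks U⁻¹ (Matrix.replicateCol (Fin 1) (-(U⁻¹ *ᵥ u)))
          (Matrix.replicateRow (Fin 1) (-(U⁻¹ *ᵥ u))) !![u ⬝ᵥ (U⁻¹ *ᵥ u) - 1]
        - ω • Matrix.fromBlocks A⁻¹ 0 0 !![(-1 : ℝ)])).PosSemidef := by
  set w := U⁻¹ *ᵥ u with hw
  set s := u ⬝ᵥ w with hs
  have hs_nonneg : 0 ≤ s := by simpa using hU.inv.posSemidef.dotProduct_mulVec_nonneg u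
  have hω : 0 < 1 - ω := by linarith
  have hc : 1 - 1 / (1 - ω) * s = (1 - ω - s) / (1 - ω) := by field_simp
  have hVinv : (U - (1 / (1 - ω)) • vecMulVec u u)⁻¹ = U⁻¹ + (1 - ω - s)⁻¹ • vecMulVec w w := by
    have hd : 1 - 1 / (1 - ω) * (u ⬝ᵥ (U⁻¹ *ᵥ u)) ≠ 0 := by rw [← hw, ← hs, hc]; positivity
    rw [inv_sub_smul_vecMulVec_self hU.isUnit (isHermitian_iff_isSymm.mp hU.isHermitian) _ _ hd,
      ← hw, ← hs, hc, div_div_div_cancel_right₀ hω.ne', one_div]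
  have hV : (U - (1 / (1 - ω)) • vecMulVec u u).PosDef := by
    rw [← posDef_inv_iff, hVinv]
    simpa only [star_trivial] using
      hU.inv.add_posSemidef ((posSemidef_vecMulVec_self_star w).smul (inv_nonneg.2 hnd.le))
  have hYinv : ((1 / ω) • A)⁻¹ = ω • A⁻¹ := by
    refine inv_eq_right_inv ?_
    rw [smul_mul_smul_comm, one_div_mul_cancel h0.ne',
      mul_nonsing_inv _ ((isUnit_iff_isUnit_det A).mp hA.isUnit), one_smul]
  rw [show U - ((1 / ω) • A + (1 / (1 - ω)) • vecMulVec u u) =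
      (U - (1 / (1 - ω)) • vecMulVec u u) - (1 / ω) • A by abel,
    hV.posSemidef_sub_iff_posSemidef_inv_sub (hA.smul (by positivity)), hYinv, hVinv,
    neg_fromBlocks_sub_smul_fromBlocks, posSemidef_fromBlocks_replicateCol_iff _ _ hnd,
    sub_add_eq_sub_sub]

theorem stmt13 {n : ℕ} (A U : Matrix (Fin n) (Fin n) ℝ)
    (hA : A.PosDef) (hU : U.PosDef) (u : Fin n → ℝ)
    (ω : ℝ) (h0 : 0 < ω) (h1 : ω < 1)
    (hnd : 0 < 1 - ω - u ⬝ᵥ (U⁻¹ *ᵥ u)) :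
    (U - ((1 / ω) • A + (1 / (1 - ω)) • Matrix.vecMulVec u u)).PosSemidef ↔
      (-(Matrix.fromBlocks U⁻¹ (Matrix.replicateCol (Fin 1) (-(U⁻¹ *ᵥ u)))
          (Matrix.replicateRow (Fin 1) (-(U⁻¹ *ᵥ u))) !![u ⬝ᵥ (U⁻¹ *ᵥ u) - 1]
        - ω • Matrix.fromBlocks A⁻¹ 0 0 !![(-1 : ℝ)])).PosSemidef :=
  stmt13_general A U hA hU u ω h0 hnd
end

section
/- Let A, U be symmetric positive definite n×n matrices and u ∈ ℝⁿ such that U ⪰ (1/ω)A + (1/(1−ω))uuᵀ for some ω ∈ (0,1). Then uᵀU⁻¹u < 1 − ω; in particular the center 0 of the enclosed ellipsoid lies strictly inside E(u,U). -/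
open Matrix

namespace Matrix

variable {n : Type*} [Fintype n]

lemma dotProduct_vecMulVec_self_mulVec (u x : n → ℝ) :
    x ⬝ᵥ (vecMulVec u u *ᵥ x) = (u ⬝ᵥ x) ^ 2 := by
  rw [vecMulVec_mulVec, dotProduct_smul, op_smul_eq_mul, dotProduct_comm, sq]

/-- With `x = U⁻¹ u` and `t = uᵀ U⁻¹ u = xᵀ U x`, testing the Loewner inequality on `x` gives
`t ≥ xᵀ B x + c t² > c t²`, which forces `t > 0` and then `c t < 1`. -/
lemma mul_dotProduct_inv_mulVec_lt_one [DecidableEq n] {U B : Matrix n n ℝ} (hU : IsUnit U)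
    (hB : B.PosDef) {c : ℝ} (hc : 0 ≤ c) {u : n → ℝ}
    (h : (U - (B + c • vecMulVec u u)).PosSemidef) :
    c * (u ⬝ᵥ (U⁻¹ *ᵥ u)) < 1 := by
  by_cases hu : u = 0
  · simp [hu]
  set x := U⁻¹ *ᵥ u
  have hUx : U *ᵥ x = u := by
    rw [mulVec_mulVec, mul_nonsing_inv _ ((isUnit_iff_isUnit_det U).mp hU), one_mulVec]
  have hx : x ≠ 0 := fun hx ↦ hu (by rw [← hUx, hx, mulVec_zero])
  set t := u ⬝ᵥ x
  have hBx : 0 < x ⬝ᵥ (B *ᵥ x) := by simpa using hB.dotProduct_mulVec_pos hx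
  have hLoewner : x ⬝ᵥ (B *ᵥ x) + c * t ^ 2 ≤ t := by
    have := h.dotProduct_mulVec_nonneg x
    simp only [sub_mulVec, add_mulVec, smul_mulVec, dotProduct_sub, dotProduct_add,
      dotProduct_smul, star_trivial, hUx, dotProduct_vecMulVec_self_mulVec, smul_eq_mul] at this
    rw [dotProduct_comm x u] at this
    linarith
  have ht : 0 < t := by nlinarith [mul_nonneg hc (sq_nonneg t)]
  nlinarith

end Matrix

theorem stmt16 {n : ℕ} (A U : Matrix (Fin n) (Fin n) ℝ)
    (hA : A.PosDef) (hU : U.PosDef) (u : Fin n → ℝ)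
    (ω : ℝ) (h0 : 0 < ω) (h1 : ω < 1)
    (h : (U - ((1 / ω) • A + (1 / (1 - ω)) • Matrix.vecMulVec u u)).PosSemidef) :
    u ⬝ᵥ (U⁻¹ *ᵥ u) < 1 - ω := by
  have hω : 0 < 1 - ω := sub_pos.mpr h1
  have key := mul_dotProduct_inv_mulVec_lt_one hU.isUnit (hA.smul (one_div_pos.mpr h0))
    (one_div_pos.mpr hω).le h
  rwa [one_div, inv_mul_lt_iff₀ hω, mul_one] at key
end

section
/- Let A₁,…,A_m be symmetric positive definite n×n matrices and a₁,…,a_m ∈ ℝⁿ. Suppose (u,U) with U symmetric positive definite satisfies, for each i, U ⪰ (1/ωᵢ)Aᵢ + (1/(1−ωᵢ))(u−aᵢ)(u−aᵢ)ᵀ for some ωᵢ ∈ (0,1). Then the ellipsoid E(u,U) = {x : (x−u)ᵀU⁻¹(x−u) ≤ 1} contains every ellipsoid E(aᵢ,Aᵢ) = {x : (x−aᵢ)ᵀAᵢ⁻¹(x−aᵢ) ≤ 1}, i = 1,…,m. -/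
/-!
For positive definite `U`, the quadratic form `zᵀ U⁻¹ z` equals `2 wᵀz - wᵀ U w` at
`w = U⁻¹ z`. Take `z = x - u` and split it as `(x - a) - (u - a)`. The GCU inequality bounds
`wᵀ U w` from below by `ω⁻¹ wᵀ A w + (1 - ω)⁻¹ (wᵀ(u - a))²`, and the two cross terms are bounded by
the AM-GM type inequalities `2 wᵀy ≤ ω⁻¹ wᵀ A w + ω yᵀ A⁻¹ y` and
`-2 s ≤ (1 - ω)⁻¹ s² + (1 - ω)`. Adding up, `zᵀ U⁻¹ z ≤ ω (x - a)ᵀ A⁻¹ (x - a) + (1 - ω) ≤ 1`.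
-/
open Matrix

section
variable {ι : Type*} [Fintype ι]

def ellipsoid [DecidableEq ι] (c : ι → ℝ) (M : Matrix ι ι ℝ) : Set (ι → ℝ) :=
  {x | (x - c) ⬝ᵥ (M⁻¹ *ᵥ (x - c)) ≤ 1}

lemma Matrix.PosDef.mulVec_inv_mulVec [DecidableEq ι] {M : Matrix ι ι ℝ} (hM : M.PosDef)
    (v : ι → ℝ) : M *ᵥ (M⁻¹ *ᵥ v) = v := by
  rw [mulVec_mulVec, mul_nonsing_inv _ ((isUnit_iff_isUnit_det M).mp hM.isUnit), one_mulVec]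

lemma Matrix.IsHermitian.dotProduct_mulVec_comm {M : Matrix ι ι ℝ} (hM : M.IsHermitian)
    (v w : ι → ℝ) : v ⬝ᵥ (M *ᵥ w) = w ⬝ᵥ (M *ᵥ v) := by
  rw [dotProduct_mulVec, ← mulVec_transpose, ← conjTranspose_eq_transpose_of_trivial, hM.eq,
    dotProduct_comm]

lemma dotProduct_vecMulVec_mulVec_self (d w : ι → ℝ) :
    w ⬝ᵥ (vecMulVec d d *ᵥ w) = (d ⬝ᵥ w) ^ 2 := by
  rw [vecMulVec_mulVec, op_smul_eq_smul, dotProduct_smul, smul_eq_mul, dotProduct_comm, sq]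

lemma Matrix.PosSemidef.dotProduct_mulVec_le_of_sub {M U : Matrix ι ι ℝ}
    (h : (U - M).PosSemidef) (w : ι → ℝ) : w ⬝ᵥ (M *ᵥ w) ≤ w ⬝ᵥ (U *ᵥ w) := by
  have := h.dotProduct_mulVec_nonneg w
  rwa [star_trivial, sub_mulVec, dotProduct_sub, sub_nonneg] at this

-- `0 ≤ vᵀ M v` at `v = w - c M⁻¹ y`, divided by `c`.
lemma Matrix.PosDef.two_mul_dotProduct_le [DecidableEq ι] {M : Matrix ι ι ℝ} (hM : M.PosDef)
    {c : ℝ} (hc : 0 < c) (w y : ι → ℝ) :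
    2 * (w ⬝ᵥ y) ≤ c⁻¹ * (w ⬝ᵥ (M *ᵥ w)) + c * (y ⬝ᵥ (M⁻¹ *ᵥ y)) := by
  set v := w - c • (M⁻¹ *ᵥ y)
  have hv : v ⬝ᵥ (M *ᵥ v) =
      w ⬝ᵥ (M *ᵥ w) - 2 * c * (w ⬝ᵥ y) + c ^ 2 * (y ⬝ᵥ (M⁻¹ *ᵥ y)) := by
    simp only [v, mulVec_sub, mulVec_smul, hM.mulVec_inv_mulVec, sub_dotProduct, dotProduct_sub,
      smul_dotProduct, dotProduct_smul, smul_eq_mul,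
      hM.isHermitian.dotProduct_mulVec_comm (M⁻¹ *ᵥ y) w, dotProduct_comm (M⁻¹ *ᵥ y) y]
    ring
  have hnonneg := hM.posSemidef.dotProduct_mulVec_nonneg v
  rw [star_trivial, hv] at hnonneg
  have := mul_nonneg (inv_nonneg.2 hc.le) hnonneg
  field_simp at this ⊢
  linarith

theorem ellipsoid_subset_ellipsoid_of_posSemidef_sub [DecidableEq ι] {A U : Matrix ι ι ℝ}
    {a u : ι → ℝ} {ω : ℝ} (hA : A.PosDef) (hU : U.PosDef) (hω0 : 0 < ω) (hω1 : ω < 1)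
    (h : (U - ((1 / ω) • A + (1 / (1 - ω)) • vecMulVec (u - a) (u - a))).PosSemidef) :
    ellipsoid a A ⊆ ellipsoid u U := by
  intro x (hx : (x - a) ⬝ᵥ (A⁻¹ *ᵥ (x - a)) ≤ 1)
  show (x - u) ⬝ᵥ (U⁻¹ *ᵥ (x - u)) ≤ 1
  set w := U⁻¹ *ᵥ (x - u)
  set t := (u - a) ⬝ᵥ w
  have hsplit : (x - u) ⬝ᵥ w = (x - a) ⬝ᵥ w - t := by
    rw [← sub_dotProduct, sub_sub_sub_cancel_right]
  have hU_form : (1 / ω) * (w ⬝ᵥ (A *ᵥ w)) + (1 / (1 - ω)) * t ^ 2 ≤ (x - u) ⬝ᵥ w := by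
    have := h.dotProduct_mulVec_le_of_sub w
    rwa [add_mulVec, smul_mulVec, smul_mulVec, dotProduct_add, dotProduct_smul, dotProduct_smul,
      dotProduct_vecMulVec_mulVec_self, smul_eq_mul, smul_eq_mul, hU.mulVec_inv_mulVec,
      dotProduct_comm w (x - u)] at this
  have hA_form := hA.two_mul_dotProduct_le hω0 w (x - a)
  have ht : -2 * t ≤ (1 - ω)⁻¹ * t ^ 2 + (1 - ω) := by
    have hs : 0 < 1 - ω := sub_pos.2 hω1
    have := div_nonneg (sq_nonneg (t + (1 - ω))) hs.le
    field_simp at this ⊢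
    linarith
  rw [dotProduct_comm w] at hA_form
  rw [one_div, one_div] at hU_form
  linarith [mul_le_mul_of_nonneg_left hx hω0.le]
end

theorem stmt18 {n m : ℕ} (A : Fin m → Matrix (Fin n) (Fin n) ℝ)
    (a : Fin m → Fin n → ℝ) (hA : ∀ i, (A i).PosDef)
    (U : Matrix (Fin n) (Fin n) ℝ) (hU : U.PosDef) (u : Fin n → ℝ)
    (ω : Fin m → ℝ) (hω0 : ∀ i, 0 < ω i) (hω1 : ∀ i, ω i < 1)
    (h : ∀ i, (U - ((1 / ω i) • A i +
      (1 / (1 - ω i)) • Matrix.vecMulVec (u - a i) (u - a i))).PosSemidef) :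
    ∀ i, {x : Fin n → ℝ | (x - a i) ⬝ᵥ ((A i)⁻¹ *ᵥ (x - a i)) ≤ 1} ⊆
      {x : Fin n → ℝ | (x - u) ⬝ᵥ (U⁻¹ *ᵥ (x - u)) ≤ 1} := fun i =>
  ellipsoid_subset_ellipsoid_of_posSemidef_sub (hA i) hU (hω0 i) (hω1 i) (h i)
end
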